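/- arXiv:1801.10416 — 7 statements merged into one kernel-verified Lean document; each statement's English description precedes it below -/
import Mathlib

section
/- Let φ be a 3-CNF formula with variables x_1,…,x_η and clauses c_1,…,c_μ, and let G_φ with its clustering and source s be the associated CluBFS instance. If φ is satisfiable, then there exists a clustered spanning tree T of G_φ rooted at s with cost(T) ≤ 3η + 8μ. -/
open SimpleGraph

inductive SatVtx (η μ : ℕ) where
  | s : SatVtx η μ
  | pos : Fin η → SatVtx η μ
  | neg : Fin η → SatVtx η μ
  | cl : Fin μ → Fin 3 → SatVtx η μ
  deriving DecidableEq, Fintype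

def satRel {η μ : ℕ} (φ : Fin μ → Fin 3 → Fin η × Bool) :
    SatVtx η μ → SatVtx η μ → Prop
  | .s, .pos _ => True
  | .s, .neg _ => True
  | .pos i, .neg i' => i = i'
  | .cl j k, .cl j' k' => j = j' ∧ k ≠ k'
  | .cl j k, .pos i => φ j k = (i, true)
  | .cl j k, .neg i => φ j k = (i, false)
  | _, _ => False

def satGraph {η μ : ℕ} (φ : Fin μ → Fin 3 → Fin η × Bool) : SimpleGraph (SatVtx η μ) :=
  SimpleGraph.fromRel (satRel φ)

def IsCST {V : Type*} (G : SimpleGraph V) (𝒞 : Set (Set V)) (T : SimpleGraph V) : Prop :=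
  T ≤ G ∧ T.IsTree ∧ ∀ C ∈ 𝒞, (T.induce C).Connected

def satClusters (η μ : ℕ) : Set (Set (SatVtx η μ)) :=
  {{SatVtx.s}} ∪ {S | ∃ i, S = {SatVtx.pos i, SatVtx.neg i}} ∪
    {S | ∃ j, S = {x | ∃ k, x = SatVtx.cl j k}}

/-!
Fix a satisfying assignment `a` and, in every clause `j`, a position `k j` holding a true literal.
Hang each true literal vertex from `s` and its false partner from it, hang the vertex of clause `j`
at position `k j` from its (true) literal vertex, and the two other clause vertices from that one.
This tree lies in `G_φ`, each cluster spans a star in it, and the depths are `1 + 2` per variable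
and `2 + 3 + 3` per clause; distances in the tree are at most these depths.
-/

namespace SimpleGraph

variable {V : Type*}

def ofParent (r : V) (p : V → V) : SimpleGraph V :=
  fromRel fun u v => u ≠ r ∧ v = p u

section ofParent

variable {r : V} {p : V → V}

lemma ofParent_adj {u v : V} :
    (ofParent r p).Adj u v ↔ u ≠ v ∧ (u ≠ r ∧ v = p u ∨ v ≠ r ∧ u = p v) :=
  fromRel_adj ..

lemma ofParent_le {G : SimpleGraph V} (h : ∀ v, v ≠ r → G.Adj v (p v)) : ofParent r p ≤ G := by
  intro u v huv
  rcases (ofParent_adj.1 huv).2 with ⟨hu, rfl⟩ | ⟨hv, rfl⟩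
  · exact h u hu
  · exact (h v hv).symm

variable {d : V → ℕ} (hd : ∀ v, v ≠ r → d (p v) < d v)
include hd

lemma ofParent_adj_parent {v : V} (hv : v ≠ r) : (ofParent r p).Adj v (p v) :=
  ofParent_adj.2 ⟨fun h => (hd v hv).ne (congrArg d h).symm, Or.inl ⟨hv, rfl⟩⟩

lemma exists_walk_ofParent_length_le (v : V) :
    ∃ w : (ofParent r p).Walk v r, w.length ≤ d v := by
  induction v using (InvImage.wf d wellFounded_lt).induction with
  | _ v ih =>
  by_cases hv : v = r
  · subst hv
    exact ⟨.nil, Nat.zero_le _⟩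
  · obtain ⟨w, hw⟩ := ih (p v) (hd v hv)
    exact ⟨.cons (ofParent_adj_parent hd hv) w, by grind [Walk.length_cons]⟩

lemma ofParent_connected : (ofParent r p).Connected := by
  refine (connected_iff _).2 ⟨fun u v => ?_, ⟨r⟩⟩
  obtain ⟨wu, -⟩ := exists_walk_ofParent_length_le hd u
  obtain ⟨wv, -⟩ := exists_walk_ofParent_length_le hd v
  exact wu.reachable.trans wv.reachable.symm

lemma dist_ofParent_le (v : V) : (ofParent r p).dist r v ≤ d v := by
  obtain ⟨w, hw⟩ := exists_walk_ofParent_length_le hd v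
  rw [dist_comm]
  exact (dist_le w).trans hw

lemma bijective_ofParent_edge :
    Function.Bijective fun v : {v // v ≠ r} =>
      (⟨s(v, p v), ofParent_adj_parent hd v.2⟩ : (ofParent r p).edgeSet) := by
  refine ⟨fun u v huv => ?_, ?_⟩
  · have huv' := congrArg (fun e : (ofParent r p).edgeSet => (e : Sym2 V)) huv
    simp only [Sym2.eq_iff] at huv'
    rcases huv' with ⟨h, -⟩ | ⟨hu, hv⟩
    · exact Subtype.ext h
    · have := hd u u.2
      have := hd v v.2
      grind
  · rintro ⟨e, he⟩
    induction e using Sym2.ind with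
    | _ u v =>
    rcases (ofParent_adj.1 ((mem_edgeSet _).1 he)).2 with ⟨hu, rfl⟩ | ⟨hv, rfl⟩
    · exact ⟨⟨u, hu⟩, rfl⟩
    · exact ⟨⟨v, hv⟩, Subtype.ext Sym2.eq_swap⟩

lemma ofParent_isTree [Finite V] : (ofParent r p).IsTree := by
  refine isTree_iff_connected_and_card.2 ⟨ofParent_connected hd, ?_⟩
  rw [← Nat.card_eq_of_bijective _ (bijective_ofParent_edge hd)]
  have := Fintype.ofFinite V
  classical
  rw [Nat.card_eq_fintype_card, Nat.card_eq_fintype_card, Fintype.card_subtype_compl,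
    Fintype.card_subtype_eq]
  have := Fintype.card_pos_iff.2 ⟨r⟩
  omega

end ofParent

lemma induce_connected_of_forall_adj {G : SimpleGraph V} {C : Set V} {c : V} (hc : c ∈ C)
    (h : ∀ u ∈ C, u ≠ c → G.Adj u c) : (G.induce C).Connected := by
  have key : ∀ u : C, (G.induce C).Reachable u ⟨c, hc⟩ := by
    rintro ⟨u, hu⟩
    by_cases huc : u = c
    · subst huc
      rfl
    · exact Adj.reachable (h u hu huc)
  exact (connected_iff _).2 ⟨fun u v => (key u).trans (key v).symm, ⟨⟨c, hc⟩⟩⟩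

end SimpleGraph

def SatVtx.equivSum (η μ : ℕ) : SatVtx η μ ≃ Unit ⊕ Fin η ⊕ Fin η ⊕ Fin μ × Fin 3 where
  toFun
    | .s => .inl ()
    | .pos i => .inr (.inl i)
    | .neg i => .inr (.inr (.inl i))
    | .cl j k => .inr (.inr (.inr (j, k)))
  invFun
    | .inl _ => .s
    | .inr (.inl i) => .pos i
    | .inr (.inr (.inl i)) => .neg i
    | .inr (.inr (.inr (j, k))) => .cl j k
  left_inv v := by cases v <;> rfl
  right_inv x := by rcases x with _ | _ | _ | _ <;> rfl

def SatVtx.ofLit {η μ : ℕ} (l : Fin η × Bool) : SatVtx η μ :=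
  if l.2 then .pos l.1 else .neg l.1

section Construction

variable {η μ : ℕ} (φ : Fin μ → Fin 3 → Fin η × Bool) (a : Fin η → Bool) (k : Fin μ → Fin 3)

def satParent : SatVtx η μ → SatVtx η μ
  | .s => .s
  | .pos i => if a i then .s else .neg i
  | .neg i => if a i then .pos i else .s
  | .cl j k' => if k' = k j then .ofLit (φ j k') else .cl j (k j)

def satDepth : SatVtx η μ → ℕ
  | .s => 0
  | .pos i => if a i then 1 else 2
  | .neg i => if a i then 2 else 1
  | .cl j k' => if k' = k j then 2 else 3

lemma satDepth_ofLit (l : Fin η × Bool) :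
    satDepth a k (.ofLit l : SatVtx η μ) = if a l.1 = l.2 then 1 else 2 := by
  obtain ⟨i, _ | _⟩ := l <;> cases h : a i <;> simp [SatVtx.ofLit, satDepth, h]

lemma satGraph_adj_satParent (v : SatVtx η μ) (hv : v ≠ .s) :
    (satGraph φ).Adj v (satParent φ a k v) := by
  rw [satGraph, fromRel_adj]
  match v with
  | .s => exact absurd rfl hv
  | .pos i | .neg i => cases h : a i <;> simp [satParent, satRel, h]
  | .cl j k' =>
    by_cases h : k' = k j
    · subst h
      rcases hl : φ j (k j) with ⟨i, _ | _⟩ <;> simp [satParent, satRel, SatVtx.ofLit, hl]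
    · simp [satParent, satRel, h, Ne.symm h]

lemma satDepth_satParent_lt (hk : ∀ j, a (φ j (k j)).1 = (φ j (k j)).2)
    (v : SatVtx η μ) (hv : v ≠ .s) : satDepth a k (satParent φ a k v) < satDepth a k v := by
  match v with
  | .s => exact absurd rfl hv
  | .pos i | .neg i => cases h : a i <;> simp [satParent, satDepth, h]
  | .cl j k' =>
    by_cases h : k' = k j
    · subst h
      rw [satParent, if_pos rfl, satDepth_ofLit, if_pos (hk j)]
      simp [satDepth]
    · simp [satParent, satDepth, h]

lemma sum_satDepth : ∑ v, satDepth a k v = 3 * η + 8 * μ := by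
  rw [← (SatVtx.equivSum η μ).symm.sum_comp]
  simp only [Fintype.sum_sum_type, Fintype.sum_prod_type]
  have hvar : ∀ i, satDepth a k (.pos i : SatVtx η μ) + satDepth a k (.neg i) = 3 := by
    intro i
    cases h : a i <;> simp [satDepth, h]
  have hcl : ∀ j, ∑ k', satDepth a k (.cl j k' : SatVtx η μ) = 8 := by
    intro j
    simp only [satDepth]
    generalize k j = c
    revert c
    decide
  change 0 + ((∑ i, satDepth a k (.pos i)) + ((∑ i, satDepth a k (.neg i))
    + ∑ j, ∑ k', satDepth a k (.cl j k'))) = _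
  rw [← add_assoc (∑ i, _), ← Finset.sum_add_distrib]
  simp only [hvar, hcl, Finset.sum_const, Finset.card_univ, Fintype.card_fin, smul_eq_mul]
  ring

variable {φ a k} (hk : ∀ j, a (φ j (k j)).1 = (φ j (k j)).2)
include hk

lemma satTree_adj_pos_neg (i : Fin η) :
    (ofParent .s (satParent φ a k)).Adj (.pos i : SatVtx η μ) (.neg i) := by
  have hd := satDepth_satParent_lt φ a k hk
  cases h : a i
  · simpa [satParent, h] using ofParent_adj_parent hd (v := .pos i) (by simp)
  · simpa [satParent, h] using (ofParent_adj_parent hd (v := .neg i) (by simp)).symm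

lemma satTree_adj_cl {j : Fin μ} {k' : Fin 3} (hk' : k' ≠ k j) :
    (ofParent .s (satParent φ a k)).Adj (.cl j k' : SatVtx η μ) (.cl j (k j)) := by
  simpa [satParent, hk'] using
    ofParent_adj_parent (satDepth_satParent_lt φ a k hk) (v := .cl j k') (by simp)

lemma satTree_induce_connected :
    ∀ C ∈ satClusters η μ, ((ofParent .s (satParent φ a k)).induce C).Connected := by
  rintro C ((rfl | ⟨i, rfl⟩) | ⟨j, rfl⟩)
  · exact induce_connected_of_forall_adj rfl fun u hu h => absurd hu h
  · refine induce_connected_of_forall_adj (c := .pos i) (by simp) fun u hu h => ?_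
    obtain rfl : u = .neg i := by simpa [h] using hu
    exact (satTree_adj_pos_neg hk i).symm
  · refine induce_connected_of_forall_adj ⟨k j, rfl⟩ ?_
    rintro _ ⟨k', rfl⟩ h
    exact satTree_adj_cl hk fun hk' => h (hk' ▸ rfl)

end Construction

theorem stmt0 (η μ : ℕ) (φ : Fin μ → Fin 3 → Fin η × Bool)
    (hsat : ∃ a : Fin η → Bool, ∀ j, ∃ k, a (φ j k).1 = (φ j k).2) :
    ∃ T : SimpleGraph (SatVtx η μ), IsCST (satGraph φ) (satClusters η μ) T ∧
      ∑ v, T.dist SatVtx.s v ≤ 3 * η + 8 * μ := by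
  obtain ⟨a, ha⟩ := hsat
  choose k hk using ha
  have hd := satDepth_satParent_lt φ a k hk
  refine ⟨ofParent .s (satParent φ a k), ⟨ofParent_le (satGraph_adj_satParent φ a k),
    ofParent_isTree hd, satTree_induce_connected hk⟩, ?_⟩
  calc ∑ v, (ofParent .s (satParent φ a k)).dist .s v
      ≤ ∑ v, satDepth a k v := Finset.sum_le_sum fun v _ => dist_ofParent_le hd v
    _ = 3 * η + 8 * μ := sum_satDepth a k
end

section
/- Let φ be a 3-CNF formula with variables x_1,…,x_η and clauses c_1,…,c_μ, and let G_φ with its clustering and source s be the associated CluBFS instance. If φ is not satisfiable, then every clustered spanning tree T of G_φ rooted at s satisfies cost(T) ≥ 3η + 8μ + 3. -/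
/-!
Every variable cluster `{v_i, v̄_i}` must be an edge of `T`, so its ends lie at different depths
below `s` and together contribute at least `1 + 2`; declaring `x_i` true iff `v_i` is a child of `s`
gives an assignment. In a rooted tree the depth has a unique minimiser on every connected vertex
set (a path leaving a vertex away from the root never climbs back to its level), so a clause
triangle whose shallowest vertex has depth `m` contributes at least `m + 2 (m + 1)`. That vertex's
parent is its literal, so `m ≥ 2`, giving `8` per clause; for a clause falsified by the assignment,
which exists since `φ` is unsatisfiable, all three literals lie at depth `≥ 2`, so `m ≥ 3` and the
clause contributes `11`.
-/

open SimpleGraph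

namespace SimpleGraph

variable {V : Type*} {G T : SimpleGraph V} {s u v w : V}

lemma Walk.dist_le_of_mem_support_of_length_eq_dist {p : G.Walk s v}
    (hp : p.length = G.dist s v) (hu : u ∈ p.support) : G.dist s u ≤ G.dist s v := by
  classical
  exact hp ▸ (dist_le _).trans (p.length_takeUntil_le_length hu)

lemma Connected.exists_adj_dist_add_one_eq (hG : G.Connected) (hv : v ≠ s) :
    ∃ u, G.Adj u v ∧ G.dist s u + 1 = G.dist s v := by
  obtain ⟨p, hp⟩ := hG.exists_walk_length_eq_dist s v
  have hnil : ¬ p.Nil := fun h => hv h.eq.symm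
  refine ⟨p.penultimate, p.adj_penultimate hnil, ?_⟩
  have hdrop := dist_le p.dropLast
  have hlen := p.length_dropLast_add_one hnil
  have htri := hG.dist_triangle (u := s) (v := p.penultimate) (w := v)
  rw [dist_eq_one_iff_adj.2 (p.adj_penultimate hnil)] at htri
  omega

lemma IsTree.eq_of_adj_of_dist_add_one_eq (hT : T.IsTree) (hu : T.Adj u v) (hw : T.Adj w v)
    (hdu : T.dist s u + 1 = T.dist s v) (hdw : T.dist s w + 1 = T.dist s v) : u = w := by
  obtain ⟨q, hq, -⟩ := hT.connected.exists_path_of_dist s v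
  suffices key : ∀ x, T.Adj x v → T.dist s x + 1 = T.dist s v → x = q.penultimate from
    (key u hu hdu).trans (key w hw hdw).symm
  intro x hx hdx
  obtain ⟨p, hp, hpd⟩ := hT.connected.exists_path_of_dist s x
  have hv : v ∉ p.support := fun hv => by
    have := p.dist_le_of_mem_support_of_length_eq_dist hpd hv
    omega
  exact hT.isAcyclic.eq_penultimate_of_adj_end hq hx.symm
    (hT.isAcyclic.mem_support_of_ne_mem_support_of_adj_of_isPath hq hp hx.symm hv)

lemma IsTree.dist_lt_of_mem_support (hT : T.IsTree) {x z y : V} (hxz : T.Adj x z)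
    (hd : T.dist s z = T.dist s x + 1) {p : T.Walk z y} (hp : p.IsPath) (hx : x ∉ p.support) :
    ∀ v ∈ p.support, T.dist s x < T.dist s v := by
  induction p generalizing x with
  | nil => simp [hd]
  | @cons z z' y h q ih =>
    rw [Walk.cons_isPath_iff] at hp
    rw [Walk.support_cons, List.mem_cons, not_or] at hx
    intro v hv
    rw [Walk.support_cons, List.mem_cons] at hv
    rcases hv with rfl | hv
    · omega
    rcases hT.dist_eq_dist_add_one_of_adj s h with hzz' | hz'z
    · have hz'x : z' = x := hT.eq_of_adj_of_dist_add_one_eq h.symm hxz hzz'.symm hd.symm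
      exact absurd (hz'x ▸ q.start_mem_support) hx.2
    · exact (ih h hz'z hp.1 hp.2 v hv).trans' (by omega)

lemma exists_isPath_forall_mem_support_of_preconnected_induce {C : Set V}
    (hC : (G.induce C).Preconnected) {x y : V} (hx : x ∈ C) (hy : y ∈ C) :
    ∃ p : G.Walk x y, p.IsPath ∧ ∀ v ∈ p.support, v ∈ C := by
  classical
  obtain ⟨w⟩ := hC ⟨x, hx⟩ ⟨y, hy⟩
  refine ⟨(w.map (Embedding.induce C).toHom).bypass, Walk.bypass_isPath _, fun v hv => ?_⟩
  obtain ⟨v', -, rfl⟩ := List.mem_map.1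
    (Walk.support_map _ _ ▸ Walk.support_bypass_subset_support _ hv)
  exact v'.2

lemma adj_of_preconnected_induce_pair (hG : (G.induce {u, v}).Preconnected) (huv : u ≠ v) :
    G.Adj u v := by
  obtain ⟨p, -, hp⟩ := exists_isPath_forall_mem_support_of_preconnected_induce hG
    (Set.mem_insert u {v}) (Set.mem_insert_of_mem u rfl)
  cases p with
  | nil => exact absurd rfl huv
  | cons h q =>
    rcases hp _ (Walk.support_cons _ _ ▸ List.mem_cons_of_mem _ q.start_mem_support) with
      rfl | rfl
    · exact absurd h G.irrefl
    · exact h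

lemma IsTree.dist_lt_dist_of_preconnected_induce (hT : T.IsTree) {C : Set V}
    (hC : (T.induce C).Preconnected) {x y : V} (hx : x ∈ C) (hy : y ∈ C) (hxy : x ≠ y)
    (hmin : ∀ z ∈ C, T.dist s x ≤ T.dist s z) : T.dist s x < T.dist s y := by
  obtain ⟨p, hp, hpC⟩ := exists_isPath_forall_mem_support_of_preconnected_induce hC hx hy
  cases p with
  | nil => exact absurd rfl hxy
  | @cons _ z _ h q =>
    rw [Walk.cons_isPath_iff] at hp
    have hz := hmin _ (hpC _ (Walk.support_cons _ _ ▸ List.mem_cons_of_mem _ q.start_mem_support))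
    have hd : T.dist s z = T.dist s x + 1 := by
      rcases hT.dist_eq_dist_add_one_of_adj s h with h' | h' <;> omega
    exact hT.dist_lt_of_mem_support h hd hp.1 hp.2 y q.end_mem_support

end SimpleGraph

lemma Fintype.card_sub_one_nsmul_add_le_sum {ι M : Type*} [Fintype ι] [DecidableEq ι]
    [AddCommMonoid M] [PartialOrder M] [IsOrderedAddMonoid M] {f : ι → M} {i₀ : ι} {a b : M}
    (h₀ : b ≤ f i₀) (h : ∀ i ≠ i₀, a ≤ f i) : (Fintype.card ι - 1) • a + b ≤ ∑ i, f i := by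
  rw [← Finset.sum_erase_add _ _ (Finset.mem_univ i₀)]
  refine add_le_add ?_ h₀
  simpa [Finset.card_erase_of_mem] using
    Finset.card_nsmul_le_sum (Finset.univ.erase i₀) f a fun i hi => h i (Finset.ne_of_mem_erase hi)

namespace SatVtx

variable {η μ : ℕ}

def lit : Fin η × Bool → SatVtx η μ
  | (i, true) => pos i
  | (i, false) => neg i

lemma lit_ne_s (l : Fin η × Bool) : (lit l : SatVtx η μ) ≠ s := by
  rcases l with ⟨i, _ | _⟩ <;> simp [lit]

def equivSum_s1 (η μ : ℕ) : SatVtx η μ ≃ Unit ⊕ Fin η ⊕ Fin η ⊕ Fin μ × Fin 3 where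
  toFun
    | s => .inl ()
    | pos i => .inr (.inl i)
    | neg i => .inr (.inr (.inl i))
    | cl j k => .inr (.inr (.inr (j, k)))
  invFun
    | .inl _ => s
    | .inr (.inl i) => pos i
    | .inr (.inr (.inl i)) => neg i
    | .inr (.inr (.inr (j, k))) => cl j k
  left_inv v := by cases v <;> rfl
  right_inv x := by rcases x with _ | i | i | ⟨j, k⟩ <;> rfl

lemma sum_eq {M : Type*} [AddCommMonoid M] (F : SatVtx η μ → M) :
    ∑ v, F v = F s + (∑ i, F (pos i) + (∑ i, F (neg i) + ∑ j, ∑ k, F (cl j k))) := by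
  rw [← (equivSum_s1 η μ).symm.sum_comp]
  simp [Fintype.sum_sum_type, Fintype.sum_prod_type, equivSum_s1]

end SatVtx

lemma satGraph_adj_cl {η μ : ℕ} {φ : Fin μ → Fin 3 → Fin η × Bool} {j : Fin μ} {k : Fin 3}
    {y : SatVtx η μ} (h : (satGraph φ).Adj (.cl j k) y) :
    (∃ k', y = .cl j k') ∨ y = SatVtx.lit (φ j k) := by
  rw [satGraph, fromRel_adj] at h
  obtain ⟨-, h | h⟩ := h <;> cases y <;> simp_all [satRel, SatVtx.lit]

namespace IsCST

variable {η μ : ℕ} {φ : Fin μ → Fin 3 → Fin η × Bool} {T : SimpleGraph (SatVtx η μ)}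

lemma one_le_dist (hT : IsCST (satGraph φ) (satClusters η μ) T) {v : SatVtx η μ}
    (hv : v ≠ .s) : 1 ≤ T.dist .s v :=
  hT.2.1.connected.pos_dist_of_ne hv.symm

lemma dist_pos_ne_dist_neg (hT : IsCST (satGraph φ) (satClusters η μ) T) (i : Fin η) :
    T.dist .s (.pos i) ≠ T.dist .s (.neg i) :=
  hT.2.1.dist_ne_of_adj _ <| adj_of_preconnected_induce_pair
    (hT.2.2 _ (Or.inl (Or.inr ⟨i, rfl⟩))).preconnected (by simp)

lemma three_le_dist_pos_add_dist_neg (hT : IsCST (satGraph φ) (satClusters η μ) T)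
    (i : Fin η) : 3 ≤ T.dist .s (.pos i) + T.dist .s (.neg i) := by
  have := hT.dist_pos_ne_dist_neg i
  have := hT.one_le_dist (v := .pos i) (by simp)
  have := hT.one_le_dist (v := .neg i) (by simp)
  omega

lemma two_le_dist_lit (hT : IsCST (satGraph φ) (satClusters η μ) T) {i : Fin η} {b : Bool}
    (h : decide (T.dist .s (.pos i) = 1) ≠ b) : 2 ≤ T.dist .s (SatVtx.lit (i, b)) := by
  have := hT.dist_pos_ne_dist_neg i
  have := hT.one_le_dist (v := .pos i) (by simp)
  have := hT.one_le_dist (v := .neg i) (by simp)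
  cases b <;> simp only [SatVtx.lit, ne_eq, decide_eq_false_iff_not, not_not,
    decide_eq_true_eq] at h ⊢ <;> omega

lemma three_mul_add_five_le_sum_dist_cl (hT : IsCST (satGraph φ) (satClusters η μ) T)
    (j : Fin μ) {L : ℕ} (hL : ∀ k, L ≤ T.dist .s (SatVtx.lit (φ j k))) :
    3 * L + 5 ≤ ∑ k, T.dist .s (.cl j k) := by
  obtain ⟨k₀, hk₀⟩ := Finite.exists_min fun k => T.dist .s (.cl j k : SatVtx η μ)
  have hC : (T.induce {x | ∃ k, x = .cl j k}).Preconnected :=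
    (hT.2.2 _ (Or.inr ⟨j, rfl⟩)).preconnected
  have hothers : ∀ k ≠ k₀, T.dist .s (.cl j k₀) + 1 ≤ T.dist .s (.cl j k) := fun k hk =>
    hT.2.1.dist_lt_dist_of_preconnected_induce hC ⟨k₀, rfl⟩ ⟨k, rfl⟩ (by simpa using hk.symm)
      (by rintro _ ⟨k', rfl⟩; exact hk₀ k')
  have hparent : L + 1 ≤ T.dist .s (.cl j k₀) := by
    obtain ⟨u, hu, hdu⟩ := hT.2.1.connected.exists_adj_dist_add_one_eq
      (s := .s) (v := .cl j k₀) (by simp)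
    rcases satGraph_adj_cl (hT.1 hu.symm) with ⟨k, rfl⟩ | rfl
    · have := hk₀ k
      omega
    · have := hL k₀
      omega
  have := Fintype.card_sub_one_nsmul_add_le_sum le_rfl hothers
  simp only [Fintype.card_fin, smul_eq_mul] at this
  omega

end IsCST

theorem stmt1 (η μ : ℕ) (φ : Fin μ → Fin 3 → Fin η × Bool)
    (hunsat : ¬ ∃ a : Fin η → Bool, ∀ j, ∃ k, a (φ j k).1 = (φ j k).2) :
    ∀ T : SimpleGraph (SatVtx η μ), IsCST (satGraph φ) (satClusters η μ) T →
      3 * η + 8 * μ + 3 ≤ ∑ v, T.dist SatVtx.s v := by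
  intro T hT
  obtain ⟨j₀, hj₀⟩ : ∃ j, ∀ k, decide (T.dist .s (.pos (φ j k).1) = 1) ≠ (φ j k).2 := by
    push Not at hunsat
    exact hunsat fun i => decide (T.dist .s (.pos i) = 1)
  have hvar : 3 * η ≤ ∑ i, (T.dist .s (.pos i) + T.dist .s (.neg i)) := by
    simpa [mul_comm] using Finset.card_nsmul_le_sum Finset.univ _ 3 fun i _ =>
      hT.three_le_dist_pos_add_dist_neg i
  have hcl : (μ - 1) * 8 + 11 ≤ ∑ j, ∑ k, T.dist .s (.cl j k) := by
    simpa using Fintype.card_sub_one_nsmul_add_le_sum (f := fun j => ∑ k, T.dist .s (.cl j k))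
      (hT.three_mul_add_five_le_sum_dist_cl j₀ fun k => hT.two_le_dist_lit (hj₀ k))
      fun j _ => hT.three_mul_add_five_le_sum_dist_cl j fun k =>
        hT.one_le_dist (SatVtx.lit_ne_s _)
  have hμ : 0 < μ := j₀.pos
  rw [SatVtx.sum_eq, ← add_assoc (∑ i, _), ← Finset.sum_add_distrib, SimpleGraph.dist_self]
  omega
end

section
/- Let G, clusters C_1,…,C_k, source s ∈ C_1, γ, and the tree T̃ produced by the cluster-contraction BFS construction be as in the context. Then for every clustered spanning tree T* of G rooted at s, cost(T̃) ≤ 2γ·cost(T*). -/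
open SimpleGraph

/-- The clusters `C i` form a partition of the vertex set:
they are nonempty, pairwise disjoint, and cover every vertex. -/
def IsPartition {V : Type*} {k : ℕ} (C : Fin k → Set V) : Prop :=
  (∀ i, (C i).Nonempty) ∧ (Pairwise fun i j => Disjoint (C i) (C j)) ∧
    (⋃ i, C i) = Set.univ

/-- `T` is a clustered spanning tree of `G`: a spanning tree such that each
cluster induces a connected subgraph (a subtree) of `T`. -/
def IsClusteredSpanningTree {V : Type*} {k : ℕ} (G : SimpleGraph V) (C : Fin k → Set V)
    (T : SimpleGraph V) : Prop :=
  T ≤ G ∧ T.IsTree ∧ ∀ i, (T.induce (C i)).Connected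

/-- The cluster-contraction of a graph: vertices are the cluster indices, with an
edge between two distinct clusters iff some edge of `G` joins them (loops deleted). -/
def contractClusters {V : Type*} {k : ℕ} (G : SimpleGraph V) (C : Fin k → Set V) :
    SimpleGraph (Fin k) where
  Adj i j := i ≠ j ∧ ∃ u ∈ C i, ∃ v ∈ C j, G.Adj u v
  symm := ⟨by
    rintro i j ⟨hij, u, hu, v, hv, huv⟩
    exact ⟨hij.symm, v, hv, u, hu, huv.symm⟩⟩
  loopless := ⟨by rintro i ⟨hii, -⟩; exact hii rfl⟩


/-- `T` is a BFS tree of `H` rooted at `r`: a spanning tree of `H` in which the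
distance from `r` to every vertex equals its distance in `H`. -/
def IsBFSTree {V : Type*} (H T : SimpleGraph V) (r : V) : Prop :=
  T ≤ H ∧ T.IsTree ∧ ∀ v, T.dist r v = H.dist r v

/-- The diameter of the subgraph of `G` induced by the set `C`:
the largest distance between two of its vertices. -/
noncomputable def clusterDiam {V : Type*} (G : SimpleGraph V) (C : Set V) : ℕ :=
  sSup {d | ∃ u v : C, (G.induce C).dist u v = d}


/-
The tree `T̃` pays at most `(γ + 1)` per contracted BFS level: the root `r j` of a cluster at
level `D j` is joined by one edge to a vertex within `γ` of its parent's root, and every other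
vertex of the cluster is within `γ` of `r j`. Any clustered spanning tree `T*` pays at least the
level, since projecting a path of `T*` to the contraction gives a walk there; moreover, in a tree
the vertex of a connected vertex set closest to `s` is unique, so all but one vertex of each
cluster pay at least one more. Summing cluster by cluster, `γ + 1 ≤ 2γ` gives the factor `2γ`.
-/

open Finset

namespace SimpleGraph

variable {V : Type*} {G T : SimpleGraph V}

lemma IsTree.length_eq_dist_of_isPath (hT : T.IsTree) {u v : V} {p : T.Walk u v}
    (hp : p.IsPath) : p.length = T.dist u v := by
  obtain ⟨q, hq, hql⟩ := hT.connected.exists_path_of_dist u v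
  have hpq := (hT.isAcyclic.subsingleton_path u v).elim ⟨p, hp⟩ ⟨q, hq⟩
  rw [← hql, show p = q from congrArg Subtype.val hpq]

lemma Walk.IsPath.append_of_support_inter {u v w : V} {p : G.Walk u v} {q : G.Walk v w}
    (hp : p.IsPath) (hq : q.IsPath) (hpq : ∀ x ∈ p.support, x ∈ q.support → x = v) :
    (p.append q).IsPath := by
  have hqs := List.nodup_cons.mp (q.cons_tail_support ▸ hq.support_nodup)
  rw [Walk.isPath_def, Walk.support_append, List.nodup_append]
  refine ⟨hp.support_nodup, hqs.2, fun x hx y hy hxy => hqs.1 ?_⟩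
  subst hxy
  exact hpq x hx (List.mem_of_mem_tail hy) ▸ hy

lemma IsTree.dist_lt_of_forall_dist_le (hT : T.IsTree) (s : V) {S : Set V}
    (hS : (T.induce S).Preconnected) {u v : V} (hu : u ∈ S) (hv : v ∈ S) (huv : u ≠ v)
    (hmin : ∀ w ∈ S, T.dist s u ≤ T.dist s w) : T.dist s u < T.dist s v := by
  classical
  obtain ⟨q, hq, hql⟩ := hT.connected.exists_path_of_dist s u
  obtain ⟨p', hp', -⟩ := (hS ⟨u, hu⟩ ⟨v, hv⟩).exists_path_of_dist
  set p : T.Walk u v := p'.map (Embedding.induce S).toHom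
  have hp : p.IsPath := hp'.map (Embedding.induce (G := T) S).injective
  have hpS : ∀ x ∈ p.support, x ∈ S := by
    intro x hx
    obtain ⟨y, -, rfl⟩ := List.mem_map.mp (Walk.support_map _ p' ▸ hx)
    exact y.2
  -- the vertices of the geodesic `q` before `u` are closer to `s` than `u`, hence outside `S`
  have hqS : ∀ x ∈ q.support, x ∈ S → x = u := by
    intro x hx hxS
    by_contra hxu
    have := dist_le (q.takeUntil x hx)
    have := q.length_takeUntil_lt_length hx hxu
    have := hmin x hxS
    omega
  have hlen := hT.length_eq_dist_of_isPath
    (hq.append_of_support_inter hp fun x hx hx' => hqS x hx (hpS x hx'))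
  have hpos : p.length ≠ 0 := fun h => huv (Walk.eq_of_length_eq_zero h)
  rw [Walk.length_append q p, hql] at hlen
  omega

lemma Reachable.dist_le_induce {S : Set V} {u v : S} (h : (G.induce S).Reachable u v) :
    G.dist u v ≤ (G.induce S).dist u v := by
  obtain ⟨p, hp⟩ := h.exists_walk_length_eq_dist
  exact (dist_le (p.map (Embedding.induce S).toHom)).trans_eq (by rw [Walk.length_map, hp])

lemma Connected.dist_le_mul_of_parent (hT : T.Connected) {ι : Type*} (s : V) (r : ι → V)
    (D : ι → ℕ) (γ : ℕ)
    (hparent : ∀ j, r j = s ∨ ∃ p x, D p + 1 = D j ∧ T.dist (r p) x ≤ γ ∧ T.Adj x (r j))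
    (j : ι) : T.dist s (r j) ≤ (γ + 1) * D j := by
  induction hj : D j using Nat.strong_induction_on generalizing j with
  | _ n ih =>
    rcases hparent j with hroot | ⟨p, x, hD, hx, hxr⟩
    · simp [hroot]
    · have hp := ih (D p) (by omega) p rfl
      have hsx := hT.dist_triangle (u := s) (v := r p) (w := x)
      have hsr := hT.dist_triangle (u := s) (v := x) (w := r j)
      rw [dist_eq_one_iff_adj.mpr hxr] at hsr
      rw [← hj, ← hD, mul_add_one]
      omega

end SimpleGraph

lemma dist_contractClusters_le_length {V : Type*} {G : SimpleGraph V} {k : ℕ}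
    {C : Fin k → Set V} (P : IndexedPartition C) {u v : V} (p : G.Walk u v) :
    (contractClusters G C).dist (P.index u) (P.index v) ≤ p.length := by
  induction p with
  | nil => simp
  | @cons a b w hab p ih =>
    rw [Walk.length_cons]
    by_cases he : P.index a = P.index b
    · rw [he]
      omega
    · have hadj : (contractClusters G C).Adj (P.index a) (P.index b) :=
        ⟨he, a, P.mem_index a, b, P.mem_index b, hab⟩
      have := hadj.reachable.dist_triangle_left (P.index w)
      rw [dist_eq_one_iff_adj.mpr hadj] at this
      omega

noncomputable def IsPartition.indexedPartition {V : Type*} {k : ℕ} {C : Fin k → Set V}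
    (h : IsPartition C) : IndexedPartition C :=
  .mk' C h.2.1 h.1 (Set.iUnion_eq_univ_iff.mp h.2.2)

lemma induce_dist_le_clusterDiam {V : Type*} [Finite V] (G : SimpleGraph V) (S : Set V)
    (u v : S) : (G.induce S).dist u v ≤ clusterDiam G S := by
  refine le_csSup (Set.Finite.bddAbove ?_) ⟨u, v, rfl⟩
  refine (Set.finite_range fun p : S × S => (G.induce S).dist p.1 p.2).subset ?_
  rintro _ ⟨u, v, rfl⟩
  exact ⟨(u, v), rfl⟩

lemma IsBFSTree.dist_le_clusterDiam {V : Type*} [Finite V] {G T : SimpleGraph V} {S : Set V}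
    {r : V} {hr : r ∈ S} (hT : IsBFSTree (G.induce S) (T.induce S) ⟨r, hr⟩) {v : V}
    (hv : v ∈ S) : T.dist r v ≤ clusterDiam G S :=
  calc T.dist r v ≤ (T.induce S).dist ⟨r, hr⟩ ⟨v, hv⟩ :=
      (hT.2.1.connected ⟨r, hr⟩ ⟨v, hv⟩).dist_le_induce
    _ = (G.induce S).dist ⟨r, hr⟩ ⟨v, hv⟩ := hT.2.2 _
    _ ≤ clusterDiam G S := induce_dist_le_clusterDiam G S _ _

namespace Finset

variable {α : Type*} {S : Finset α}

lemma sum_add_le_card_mul {a : α} (ha : a ∈ S) {f : α → ℕ} {A δ : ℕ} (hfa : f a ≤ A)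
    (hf : ∀ v ∈ S, f v ≤ A + δ) : ∑ v ∈ S, f v + δ ≤ #S * (A + δ) := by
  classical
  have herase : ∑ v ∈ S.erase a, f v ≤ #(S.erase a) * (A + δ) := by
    simpa using sum_le_card_nsmul _ _ _ fun v hv => hf v (mem_of_mem_erase hv)
  rw [← add_sum_erase S f ha, ← card_erase_add_one ha, add_one_mul]
  omega

lemma card_mul_le_sum_add {g : α → ℕ} {D δ : ℕ} (hg : ∀ v ∈ S, D ≤ g v)
    (hlow : ∀ u ∈ S, ∀ v ∈ S, g u < D + δ → g v < D + δ → u = v) :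
    #S * (D + δ) ≤ ∑ v ∈ S, g v + δ := by
  classical
  by_cases h : ∃ b ∈ S, g b < D + δ
  · obtain ⟨b, hb, hgb⟩ := h
    have herase : #(S.erase b) * (D + δ) ≤ ∑ v ∈ S.erase b, g v := by
      simp only [← smul_eq_mul]
      refine card_nsmul_le_sum _ _ _ fun v hv => ?_
      obtain ⟨hvb, hv⟩ := mem_erase.mp hv
      by_contra! hgv
      exact hvb (hlow v hv b hb hgv hgb)
    rw [← add_sum_erase S g hb, ← card_erase_add_one hb, add_one_mul]
    have := hg b hb
    omega
  · push Not at h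
    have : #S * (D + δ) ≤ ∑ v ∈ S, g v := by simpa using card_nsmul_le_sum S g (D + δ) h
    omega

lemma sum_le_two_mul_sum {a : α} (ha : a ∈ S) {f g : α → ℕ} {D γ : ℕ} (hγ : 1 ≤ γ)
    (hfa : f a ≤ (γ + 1) * D) (hf : ∀ v ∈ S, f v ≤ (γ + 1) * D + γ)
    (hg : ∀ v ∈ S, D ≤ g v) (hlow : ∀ u ∈ S, ∀ v ∈ S, g u = D → g v = D → u = v) :
    ∑ v ∈ S, f v ≤ 2 * γ * ∑ v ∈ S, g v := by
  have hup := sum_add_le_card_mul ha hfa hf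
  have hdown := card_mul_le_sum_add (δ := 1) hg fun u hu v hv hgu hgv =>
    hlow u hu v hv (by linarith [hg u hu]) (by linarith [hg v hv])
  have hcard : 1 ≤ #S := card_pos.mpr ⟨a, ha⟩
  nlinarith [Nat.mul_le_mul_left (2 * γ) hdown, Nat.mul_le_mul_right (#S * D) hγ,
    Nat.mul_le_mul_left γ hcard]

end Finset

theorem stmt5_general {V : Type*} [Fintype V] (G : SimpleGraph V)
    {k : ℕ} (C : Fin k → Set V) (hpart : IsPartition C)
    (s : V) (i₀ : Fin k) (hs : s ∈ C i₀)
    (γ : ℕ) (hγdef : γ = ⨆ i, clusterDiam G (C i)) (hγ : 1 ≤ γ)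
    -- `Tt` is the clustered spanning tree produced by the cluster-contraction BFS
    -- construction:
    (Tt : SimpleGraph V) (hTt : IsClusteredSpanningTree G C Tt)
    (r : Fin k → V) (hr : ∀ j, r j ∈ C j) (hr0 : r i₀ = s)
    -- (a) the contraction of `Tt` is a BFS tree of the contraction of `G` rooted at `C i₀`:
    (ha : IsBFSTree (contractClusters G C) (contractClusters Tt C) i₀)
    -- (b) each cluster induces in `Tt` a BFS tree of `G[C j]` rooted at `r j`:
    (hb : ∀ j, IsBFSTree (G.induce (C j)) (Tt.induce (C j)) ⟨r j, hr j⟩)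
    -- for `j ≠ i₀`, `r j` is the endpoint in `C j` of the unique edge of `Tt`
    -- joining `C j` to its parent cluster in the contracted BFS tree:
    (hparent : ∀ j, j ≠ i₀ → ∃ pcl : Fin k, (contractClusters Tt C).Adj pcl j ∧
      (contractClusters Tt C).dist i₀ pcl + 1 = (contractClusters Tt C).dist i₀ j ∧
      ∃ x ∈ C pcl, Tt.Adj x (r j)) :
    ∀ Tstar : SimpleGraph V, IsClusteredSpanningTree G C Tstar →
      ∑ v, Tt.dist s v ≤ 2 * γ * ∑ v, Tstar.dist s v := by
  classical
  intro Tstar hstar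
  set P := hpart.indexedPartition
  set D : Fin k → ℕ := (contractClusters Tt C).dist i₀
  have hradius : ∀ j, ∀ v ∈ C j, Tt.dist (r j) v ≤ γ := fun j v hv =>
    ((hb j).dist_le_clusterDiam hv).trans
      (hγdef ▸ le_ciSup (f := fun i => clusterDiam G (C i)) (Set.finite_range _).bddAbove j)
  have hroot : ∀ j, Tt.dist s (r j) ≤ (γ + 1) * D j := by
    refine hTt.2.1.connected.dist_le_mul_of_parent s r D γ fun j => ?_
    by_cases hj : j = i₀
    · exact .inl (hj ▸ hr0)
    · obtain ⟨p, -, hD, x, hx, hxr⟩ := hparent j hj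
      exact .inr ⟨p, x, hD, hradius p x hx, hxr⟩
  have hlevel : ∀ v, D (P.index v) ≤ Tstar.dist s v := by
    intro v
    obtain ⟨p, hp⟩ := hstar.2.1.connected.exists_walk_length_eq_dist s v
    rw [show D (P.index v) = _ from ha.2.2 _, ← P.mem_iff_index_eq.mp hs, ← hp]
    simpa using dist_contractClusters_le_length P (p.mapLe hstar.1)
  rw [← sum_fiberwise univ P.index, ← sum_fiberwise univ P.index, mul_sum]
  refine sum_le_sum fun j _ => sum_le_two_mul_sum (a := r j) ?_ hγ (hroot j) ?_ ?_ ?_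
  all_goals simp only [mem_filter, mem_univ, true_and, ← P.mem_iff_index_eq]
  · exact hr j
  · exact fun v hv => hTt.2.1.connected.dist_triangle.trans
      (by linarith [hroot j, hradius j v hv])
  · exact fun v hv => P.mem_iff_index_eq.mp hv ▸ hlevel v
  · intro u hu v hv hgu hgv
    by_contra huv
    have := hstar.2.1.dist_lt_of_forall_dist_le s (hstar.2.2 j).preconnected hu hv huv
      fun w hw => hgu ▸ P.mem_iff_index_eq.mp hw ▸ hlevel w
    omega

theorem stmt5 {V : Type*} [Fintype V] (G : SimpleGraph V) (hG : G.Connected)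
    {k : ℕ} (C : Fin k → Set V) (hpart : IsPartition C)
    (hconn : ∀ i, (G.induce (C i)).Connected)
    (s : V) (i₀ : Fin k) (hs : s ∈ C i₀)
    (γ : ℕ) (hγdef : γ = ⨆ i, clusterDiam G (C i)) (hγ : 1 ≤ γ)
    -- `Tt` is the clustered spanning tree produced by the cluster-contraction BFS
    -- construction:
    (Tt : SimpleGraph V) (hTt : IsClusteredSpanningTree G C Tt)
    (r : Fin k → V) (hr : ∀ j, r j ∈ C j) (hr0 : r i₀ = s)
    -- (a) the contraction of `Tt` is a BFS tree of the contraction of `G` rooted at `C i₀`: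
    (ha : IsBFSTree (contractClusters G C) (contractClusters Tt C) i₀)
    -- (b) each cluster induces in `Tt` a BFS tree of `G[C j]` rooted at `r j`:
    (hb : ∀ j, IsBFSTree (G.induce (C j)) (Tt.induce (C j)) ⟨r j, hr j⟩)
    -- for `j ≠ i₀`, `r j` is the endpoint in `C j` of the unique edge of `Tt`
    -- joining `C j` to its parent cluster in the contracted BFS tree:
    (hparent : ∀ j, j ≠ i₀ → ∃ pcl : Fin k, (contractClusters Tt C).Adj pcl j ∧
      (contractClusters Tt C).dist i₀ pcl + 1 = (contractClusters Tt C).dist i₀ j ∧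
      ∃ x ∈ C pcl, Tt.Adj x (r j)) :
    ∀ Tstar : SimpleGraph V, IsClusteredSpanningTree G C Tstar →
      ∑ v, Tt.dist s v ≤ 2 * γ * ∑ v, Tstar.dist s v :=
  stmt5_general G C hpart s i₀ hs γ hγdef hγ Tt hTt r hr hr0 ha hb hparent
end

section
/- Let T be a finite tree with a distinguished root vertex s, and suppose T contains (as a subgraph) a path P with γ ≥ 1 edges, i.e., on γ+1 distinct vertices. Then Σ_{v ∈ V(P)} d_T(s,v) ≥ γ²/4 + γ/2 if γ is even, and Σ_{v ∈ V(P)} d_T(s,v) ≥ γ²/4 + γ/2 + 1/4 if γ is odd; in particular, Σ_{v ∈ V(P)} d_T(s,v) ≥ γ²/4. -/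
/-!
Write `v₀, …, v_γ` for the vertices of the path. In a tree every path is a geodesic, so
`d(vᵢ, v_{γ-i}) = |γ - 2i|`, and the triangle inequality through `s` gives
`d(s, vᵢ) + d(s, v_{γ-i}) ≥ |γ - 2i|`. Summing over `i` counts every vertex twice, hence
`2 Σ d(s, vᵢ) ≥ Σᵢ |γ - 2i| = ⌊(γ + 1)² / 2⌋`, i.e. `Σ d(s, vᵢ) ≥ ⌊(γ + 1)² / 4⌋`.
-/

open SimpleGraph Finset

lemma sum_range_natAbs_sub_two_mul (n : ℕ) :
    ∑ i ∈ range (n + 1), ((n : ℤ) - 2 * i).natAbs = (n + 1) ^ 2 / 2 := by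
  induction n using Nat.twoStepInduction with
  | zero => simp
  | one => simp [sum_range_succ]
  | more n ih _ =>
    rw [sum_range_succ, sum_range_succ']
    have hshift : ∀ i : ℕ, ((↑(n + 2) : ℤ) - 2 * ↑(i + 1)).natAbs = ((n : ℤ) - 2 * i).natAbs := by
      intro i
      push_cast
      ring_nf
    simp only [hshift, ih]
    rw [show (n + 2 + 1) ^ 2 = (n + 1) ^ 2 + 2 * (2 * n + 4) by ring,
      Nat.add_mul_div_left _ _ two_pos]
    push_cast
    omega

lemma bounds_of_sq_succ_div_four_le {n S : ℕ} (h : (n + 1) ^ 2 / 4 ≤ S) :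
    (Even n → (n : ℝ) ^ 2 / 4 + (n : ℝ) / 2 ≤ S) ∧
    (Odd n → (n : ℝ) ^ 2 / 4 + (n : ℝ) / 2 + 1 / 4 ≤ S) ∧
    (n : ℝ) ^ 2 / 4 ≤ S := by
  have heven : Even n → (n : ℝ) ^ 2 / 4 + (n : ℝ) / 2 ≤ S := by
    rintro ⟨m, rfl⟩
    rw [show (m + m + 1) ^ 2 = 4 * (m * (m + 1)) + 1 by ring] at h
    have hm : ((m * (m + 1) : ℕ) : ℝ) ≤ S := by exact_mod_cast (by omega : m * (m + 1) ≤ S)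
    push_cast at hm ⊢
    linarith
  have hodd : Odd n → (n : ℝ) ^ 2 / 4 + (n : ℝ) / 2 + 1 / 4 ≤ S := by
    rintro ⟨m, rfl⟩
    rw [show (2 * m + 1 + 1) ^ 2 = 4 * (m + 1) ^ 2 by ring] at h
    have hm : (((m + 1) ^ 2 : ℕ) : ℝ) ≤ S := by exact_mod_cast (by omega : (m + 1) ^ 2 ≤ S)
    push_cast at hm ⊢
    linarith
  refine ⟨heven, hodd, ?_⟩
  rcases n.even_or_odd with hn | hn
  · linarith [heven hn, (n.cast_nonneg : (0 : ℝ) ≤ n)]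
  · linarith [hodd hn, (n.cast_nonneg : (0 : ℝ) ≤ n)]

namespace SimpleGraph

variable {V : Type*} {G : SimpleGraph V}

lemma Walk.sum_map_support {M : Type*} [AddCommMonoid M] {u v : V} (p : G.Walk u v)
    (f : V → M) : (p.support.map f).sum = ∑ i ∈ range (p.length + 1), f (p.getVert i) := by
  have hsupport : p.support = (List.range (p.length + 1)).map p.getVert :=
    List.ext_getElem (by simp) fun i _ _ => by simp [Walk.support_getElem_eq_getVert]
  rw [hsupport, List.map_map, ← Finset.sum_map_val]
  rfl

lemma IsAcyclic.dist_eq_length (hG : G.IsAcyclic) {u v : V} {p : G.Walk u v} (hp : p.IsPath) :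
    G.dist u v = p.length := by
  obtain ⟨q, hq, hql⟩ := p.reachable.exists_path_of_dist
  obtain rfl : q = p := congrArg Subtype.val ((hG.subsingleton_path u v).elim ⟨q, hq⟩ ⟨p, hp⟩)
  exact hql.symm

lemma IsAcyclic.dist_getVert_of_le (hG : G.IsAcyclic) {u v : V} {p : G.Walk u v}
    (hp : p.IsPath) {i j : ℕ} (hij : i ≤ j) (hj : j ≤ p.length) :
    G.dist (p.getVert i) (p.getVert j) = j - i := by
  have := hG.dist_eq_length ((hp.drop i).take (j - i))
  rwa [Walk.take_length, Walk.drop_length, Walk.drop_getVert, Nat.add_sub_cancel' hij,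
    min_eq_left (by omega)] at this

theorem IsTree.sq_succ_div_four_le_sum_dist (hG : G.IsTree) (s : V) {u v : V}
    {p : G.Walk u v} (hp : p.IsPath) :
    (p.length + 1) ^ 2 / 4 ≤ (p.support.map (G.dist s)).sum := by
  set n := p.length
  rw [p.sum_map_support]
  set S := ∑ i ∈ range (n + 1), G.dist s (p.getVert i)
  have hpair : ∀ i ∈ range (n + 1),
      ((n : ℤ) - 2 * i).natAbs ≤ G.dist s (p.getVert i) + G.dist s (p.getVert (n - i)) := by
    intro i hi
    have hin := mem_range_succ_iff.mp hi
    have htri := hG.connected.dist_triangle (u := p.getVert i) (v := s) (w := p.getVert (n - i))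
    rw [dist_comm (v := s)] at htri
    rcases le_total i (n - i) with h | h
    · have := hG.isAcyclic.dist_getVert_of_le hp h (by omega)
      omega
    · have := G.dist_comm.trans (hG.isAcyclic.dist_getVert_of_le hp h (by omega))
      omega
  have hreflect : ∑ i ∈ range (n + 1), G.dist s (p.getVert (n - i)) = S := by
    simpa using sum_range_reflect (fun i => G.dist s (p.getVert i)) (n + 1)
  have hdouble : (n + 1) ^ 2 / 2 ≤ 2 * S := calc
    (n + 1) ^ 2 / 2 = ∑ i ∈ range (n + 1), ((n : ℤ) - 2 * i).natAbs :=
      (sum_range_natAbs_sub_two_mul n).symm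
    _ ≤ ∑ i ∈ range (n + 1), (G.dist s (p.getVert i) + G.dist s (p.getVert (n - i))) :=
      sum_le_sum hpair
    _ = 2 * S := by rw [sum_add_distrib, hreflect, two_mul]
  rw [show 4 = 2 * 2 from rfl, ← Nat.div_div_eq_div_mul]
  omega

end SimpleGraph

theorem stmt6_general {V : Type*} (T : SimpleGraph V) (hT : T.IsTree) (s : V)
    (γ : ℕ) {a b : V} (p : T.Walk a b) (hp : p.IsPath)
    (hlen : p.length = γ) :
    (Even γ →
      (γ : ℝ) ^ 2 / 4 + (γ : ℝ) / 2 ≤ ((p.support.map (T.dist s)).sum : ℝ)) ∧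
    (Odd γ →
      (γ : ℝ) ^ 2 / 4 + (γ : ℝ) / 2 + 1 / 4 ≤ ((p.support.map (T.dist s)).sum : ℝ)) ∧
    (γ : ℝ) ^ 2 / 4 ≤ ((p.support.map (T.dist s)).sum : ℝ) := by
  subst hlen
  exact bounds_of_sq_succ_div_four_le (hT.sq_succ_div_four_le_sum_dist s hp)

theorem stmt6 {V : Type*} [Fintype V] (T : SimpleGraph V) (hT : T.IsTree) (s : V)
    (γ : ℕ) (hγ : 1 ≤ γ) {a b : V} (p : T.Walk a b) (hp : p.IsPath)
    (hlen : p.length = γ) :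
    (Even γ →
      (γ : ℝ) ^ 2 / 4 + (γ : ℝ) / 2 ≤ ((p.support.map (T.dist s)).sum : ℝ)) ∧
    (Odd γ →
      (γ : ℝ) ^ 2 / 4 + (γ : ℝ) / 2 + 1 / 4 ≤ ((p.support.map (T.dist s)).sum : ℝ)) ∧
    (γ : ℝ) ^ 2 / 4 ≤ ((p.support.map (T.dist s)).sum : ℝ) :=
  stmt6_general T hT s γ p hp hlen
end

section
/- Let G be a finite connected undirected unweighted graph whose vertex set is partitioned into pairwise disjoint nonempty clusters C_1,…,C_k, each inducing a connected subgraph G[C_i], let s be a source vertex, and let γ = max_i diam(G[C_i]). Then every clustered spanning tree T of G rooted at s satisfies cost(T) ≥ γ²/4. -/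
open SimpleGraph

/-!
Let `u, v` lie in a cluster `C`. Since `C` spans a subtree of `T`, the tree path
`u = x₀, …, x_L = v` runs inside `T[C] ≤ G[C]`, so `L ≥ d_{G[C]}(u, v)`.
Being a geodesic of `T`, it has `d(u, xⱼ) = j`, hence `d(s, xⱼ) ≥ |j - d(s, u)|` by the
triangle inequality, and summing over the distinct vertices `xⱼ` gives
`cost(T) ≥ ∑ⱼ |j - d(s, u)| ≥ L² / 4`.
-/

open Finset

theorem sq_le_four_mul_sum_abs_sub (L : ℕ) (a : ℤ) :
    (L : ℤ) ^ 2 ≤ 4 * ∑ j ∈ range (L + 1), |(j : ℤ) - a| := by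
  induction L using Nat.twoStepInduction generalizing a with
  | zero => positivity
  | one =>
    simp only [sum_range_succ, range_zero, sum_empty]
    push_cast
    cases abs_cases (0 - a) <;> cases abs_cases (1 - a) <;> linarith
  | more L ih _ =>
    -- peel off both ends: the outer terms contribute `|a| + |L + 2 - a| ≥ L + 2`
    have hinner := ih (a - 1)
    rw [sum_range_succ, sum_range_succ']
    have hshift : ∑ j ∈ range (L + 1), |((j + 1 : ℕ) : ℤ) - a|
        = ∑ j ∈ range (L + 1), |(j : ℤ) - (a - 1)| :=
      sum_congr rfl fun j _ => by push_cast; ring_nf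
    have hends : (L : ℤ) + 2 ≤ |(L : ℤ) + 2 - a| + |0 - a| := by
      have hpos : (0 : ℤ) ≤ L + 2 := by positivity
      simpa [abs_of_nonneg hpos] using abs_sub_le ((L : ℤ) + 2) a 0
    rw [hshift]
    push_cast
    nlinarith

namespace SimpleGraph

lemma Walk.dist_getVert_of_length_eq_dist {V : Type*} {G : SimpleGraph V} {u v : V}
    {p : G.Walk u v} (hp : p.length = G.dist u v) {j : ℕ} (hj : j ≤ p.length) :
    G.dist u (p.getVert j) = j := by
  have h := length_eq_dist_of_subwalk hp (p.isSubwalk_take j)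
  rw [Walk.take_length, min_eq_left hj] at h
  exact h.symm

lemma Connected.abs_sub_dist_le {V : Type*} {G : SimpleGraph V} (hG : G.Connected)
    (s u x : V) : |(G.dist u x : ℤ) - G.dist u s| ≤ G.dist s x := by
  have h₁ := hG.dist_triangle (u := u) (v := s) (w := x)
  have h₂ := hG.dist_triangle (u := u) (v := x) (w := s)
  rw [dist_comm (u := x)] at h₂
  rw [abs_le]
  omega

theorem Connected.sq_dist_le_four_mul_sum_dist {V : Type*} [Fintype V] {G : SimpleGraph V}
    (hG : G.Connected) (s u v : V) : G.dist u v ^ 2 ≤ 4 * ∑ x, G.dist s x := by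
  classical
  obtain ⟨p, hp⟩ := hG.exists_walk_length_eq_dist u v
  have hdist : ∀ j ∈ range (p.length + 1), G.dist u (p.getVert j) = j := fun j hj =>
    Walk.dist_getVert_of_length_eq_dist hp (Nat.lt_succ_iff.1 (mem_range.1 hj))
  have hinj : Set.InjOn p.getVert (range (p.length + 1)) := fun i hi j hj hij => by
    rw [← hdist i hi, ← hdist j hj, hij]
  have hpath : ∑ j ∈ range (p.length + 1), G.dist s (p.getVert j) ≤ ∑ x, G.dist s x := by
    rw [← sum_image hinj]
    exact sum_le_sum_of_subset (subset_univ _)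
  zify at hpath ⊢
  calc (G.dist u v : ℤ) ^ 2 = (p.length : ℤ) ^ 2 := by rw [hp]
    _ ≤ 4 * ∑ j ∈ range (p.length + 1), |(j : ℤ) - G.dist u s| :=
      sq_le_four_mul_sum_abs_sub _ _
    _ ≤ 4 * ∑ j ∈ range (p.length + 1), (G.dist s (p.getVert j) : ℤ) := by
      gcongr with j hj
      simpa only [hdist j hj] using hG.abs_sub_dist_le s u (p.getVert j)
    _ ≤ 4 * ∑ x, (G.dist s x : ℤ) := by gcongr

lemma IsAcyclic.length_eq_dist_of_isPath {V : Type*} {G : SimpleGraph V} (hG : G.IsAcyclic)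
    {u v : V} {p : G.Walk u v} (hp : p.IsPath) : p.length = G.dist u v := by
  obtain ⟨q, hq, hlen⟩ := p.reachable.exists_path_of_dist
  have hpq : p = q := congrArg Subtype.val ((hG.subsingleton_path u v).elim ⟨p, hp⟩ ⟨q, hq⟩)
  exact hpq ▸ hlen

lemma IsAcyclic.dist_induce {V : Type*} {G : SimpleGraph V} (hG : G.IsAcyclic) {S : Set V}
    {u v : S} (h : (G.induce S).Reachable u v) : (G.induce S).dist u v = G.dist u v := by
  obtain ⟨q, hq, hlen⟩ := h.exists_path_of_dist
  rw [← hlen, ← q.length_map (Embedding.induce S).toHom]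
  exact hG.length_eq_dist_of_isPath (hq.map Subtype.val_injective)

lemma IsClusteredSpanningTree.dist_induce_le {V : Type*} {k : ℕ} {G T : SimpleGraph V}
    {C : Fin k → Set V} (hT : IsClusteredSpanningTree G C T) (i : Fin k) (u v : C i) :
    (G.induce (C i)).dist u v ≤ T.dist u v := by
  obtain ⟨hTG, hTree, hTC⟩ := hT
  have hreach := (hTC i).preconnected u v
  calc (G.induce (C i)).dist u v ≤ (T.induce (C i)).dist u v :=
        hreach.dist_anti fun _ _ h => hTG h
    _ = T.dist u v := hTree.isAcyclic.dist_induce hreach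

end SimpleGraph

lemma clusterDiam_le {V : Type*} {G : SimpleGraph V} {C : Set V} {m : ℕ}
    (h : ∀ u v : C, (G.induce C).dist u v ≤ m) : clusterDiam G C ≤ m :=
  csSup_le' fun _ ⟨u, v, huv⟩ => huv ▸ h u v

theorem stmt7_general {V : Type*} [Fintype V] (G : SimpleGraph V)
    {k : ℕ} (C : Fin k → Set V)
    (s : V) (γ : ℕ) (hγdef : γ = ⨆ i, clusterDiam G (C i))
    (T : SimpleGraph V) (hT : IsClusteredSpanningTree G C T) :
    (γ : ℝ) ^ 2 / 4 ≤ ((∑ v, T.dist s v : ℕ) : ℝ) := by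
  set cost := ∑ v, T.dist s v
  -- `m ≤ √(4 cost)` is the same as `m² ≤ 4 cost`, and the former passes through suprema
  have hcluster : ∀ i, clusterDiam G (C i) ≤ Nat.sqrt (4 * cost) := fun i =>
    clusterDiam_le fun u v => Nat.le_sqrt'.2 <|
      (Nat.pow_le_pow_left (hT.dist_induce_le i u v) 2).trans
        (hT.2.1.connected.sq_dist_le_four_mul_sum_dist s u v)
  have hγ : γ ^ 2 ≤ 4 * cost := Nat.le_sqrt'.1 (hγdef ▸ ciSup_le' hcluster)
  have hγR : (γ : ℝ) ^ 2 ≤ 4 * cost := by exact_mod_cast hγ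
  linarith

theorem stmt7 {V : Type*} [Fintype V] (G : SimpleGraph V) (hG : G.Connected)
    {k : ℕ} (C : Fin k → Set V) (hpart : IsPartition C)
    (hconn : ∀ i, (G.induce (C i)).Connected)
    (s : V) (γ : ℕ) (hγdef : γ = ⨆ i, clusterDiam G (C i))
    (T : SimpleGraph V) (hT : IsClusteredSpanningTree G C T) :
    (γ : ℝ) ^ 2 / 4 ≤ ((∑ v, T.dist s v : ℕ) : ℝ) :=
  stmt7_general G C s γ hγdef T hT
end

section
/- Let φ be a 3-CNF formula with variables x_1,…,x_η and clauses c_1,…,c_μ, let M be a positive integer, and let the weighted graph G'_φ with its clustering and source s be the associated CluSPT instance. If φ is satisfiable, then the minimum of cost(T) over all clustered spanning trees T of G'_φ rooted at s equals η. -/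
open SimpleGraph

inductive WVtx (η μ M : ℕ) where
  | s : WVtx η μ M
  | pos : Fin η → WVtx η μ M
  | neg : Fin η → WVtx η μ M
  | cl : Fin μ → Fin 3 → WVtx η μ M
  | r : Fin μ → WVtx η μ M
  | pth : Fin μ → Fin M → WVtx η μ M
  deriving DecidableEq, Fintype

/-- Base adjacency relation for the CluSPT hardness graph `G'_φ`. -/
def wRel {η μ M : ℕ} (φ : Fin μ → Fin 3 → Fin η × Bool) :
    WVtx η μ M → WVtx η μ M → Prop
  | .s, .pos _ => True
  | .s, .neg _ => True
  | .pos i, .neg i' => i = i'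
  | .r j, .cl j' _ => j = j'
  | .r j, .pth j' t => j = j' ∧ (t : ℕ) = 0
  | .pth j t, .pth j' t' => j = j' ∧ (t' : ℕ) = (t : ℕ) + 1
  | .cl j k, .pos i => φ j k = (i, true)
  | .cl j k, .neg i => φ j k = (i, false)
  | _, _ => False

def wGraph {η μ M : ℕ} (φ : Fin μ → Fin 3 → Fin η × Bool) : SimpleGraph (WVtx η μ M) :=
  SimpleGraph.fromRel (wRel φ)

-- Edge weights: every edge has weight `0` except the edges `(v_i, v̄_i)`,
-- which have weight `1`.
open Classical in
noncomputable def wWt (η μ M : ℕ) : Sym2 (WVtx η μ M) → ℝ :=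
  fun e => if ∃ i : Fin η, e = s(WVtx.pos i, WVtx.neg i) then 1 else 0

def wClusters (η μ M : ℕ) : Set (Set (WVtx η μ M)) :=
  {{WVtx.s}} ∪ {S | ∃ i, S = {WVtx.pos i, WVtx.neg i}} ∪
    {S | ∃ j, S = {x | (∃ k, x = WVtx.cl j k) ∨ x = WVtx.r j ∨ ∃ t, x = WVtx.pth j t}}

/-- The weighted distance between `u` and `v` in `T` with edge weights `w`:
the least total weight of a walk from `u` to `v` (for a tree with nonnegative
weights, this is the total weight of the unique `u`–`v` path). -/
noncomputable def wdist {V : Type*} (T : SimpleGraph V) (w : Sym2 V → ℝ) (u v : V) : ℝ :=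
  sInf {x | ∃ p : T.Walk u v, x = (p.edges.map w).sum}


/-!
Lower bound: the cluster `{v_i, v̄_i}` of a clustered spanning tree `T` is connected, so `T`
contains the weight-one edge `v_i v̄_i`. In a tree this edge is a bridge, hence lies on the path
from `s` to `v_i` or on the one to `v̄_i`, and the η variables contribute at least η in total.

Upper bound: for a satisfying assignment, hang the true literal vertex of every variable from `s`,
the false one from the true one, and each clause cluster from a satisfied literal of the clause.
Then exactly the η false literal vertices are at distance one from `s`, all others at
distance zero.
-/

section WalkWeight

variable {V : Type*} {T : SimpleGraph V} {w : Sym2 V → ℝ}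

lemma walk_weight_nonneg (hw : ∀ e, 0 ≤ w e) {u v : V} (q : T.Walk u v) :
    0 ≤ (q.edges.map w).sum :=
  List.sum_nonneg <| by simpa using fun e _ => hw e

lemma wdist_nonneg (hw : ∀ e, 0 ≤ w e) (u v : V) : 0 ≤ wdist T w u v :=
  Real.sInf_nonneg <| by rintro _ ⟨q, rfl⟩; exact walk_weight_nonneg hw q

lemma wdist_le_walk_weight (hw : ∀ e, 0 ≤ w e) {u v : V} (q : T.Walk u v) :
    wdist T w u v ≤ (q.edges.map w).sum :=
  csInf_le ⟨0, by rintro _ ⟨q, rfl⟩; exact walk_weight_nonneg hw q⟩ ⟨q, rfl⟩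

lemma le_wdist {u v : V} {c : ℝ} (h : T.Reachable u v)
    (hc : ∀ q : T.Walk u v, c ≤ (q.edges.map w).sum) : c ≤ wdist T w u v :=
  le_csInf ⟨_, h.some, rfl⟩ <| by rintro _ ⟨q, rfl⟩; exact hc q

/-- In a tree every edge is a bridge, so it lies on the path from any root to one of its ends. -/
lemma SimpleGraph.IsTree.weight_le_wdist_add_wdist (hT : T.IsTree) (hw : ∀ e, 0 ≤ w e)
    {u v : V} (huv : T.Adj u v) (s : V) : w s(u, v) ≤ wdist T w s u + wdist T w s v := by
  have hbridge := (isBridge_iff_forall_walk_mem_edges.mp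
    (isAcyclic_iff_forall_adj_isBridge.mp hT.isAcyclic huv))
  have hsum : ∀ (p : T.Walk s u) (q : T.Walk s v),
      w s(u, v) ≤ (p.edges.map w).sum + (q.edges.map w).sum := by
    intro p q
    have hmem := hbridge (p.reverse.append q)
    rw [Walk.edges_append, Walk.edges_reverse, List.mem_append, List.mem_reverse] at hmem
    have hp := walk_weight_nonneg hw p
    have hq := walk_weight_nonneg hw q
    have hpos : ∀ l : List (Sym2 V), s(u, v) ∈ l → w s(u, v) ≤ (l.map w).sum := fun l hl =>
      List.single_le_sum (by simpa using fun e _ => hw e) _ (List.mem_map_of_mem hl)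
    rcases hmem with h | h
    · linarith [hpos _ h]
    · linarith [hpos _ h]
  have hconn := hT.connected.preconnected
  suffices w s(u, v) - wdist T w s v ≤ wdist T w s u by linarith
  refine le_wdist (hconn s u) fun p => ?_
  suffices w s(u, v) - (p.edges.map w).sum ≤ wdist T w s v by linarith
  exact le_wdist (hconn s v) fun q => by linarith [hsum p q]

end WalkWeight

lemma SimpleGraph.adj_of_induce_pair_connected {V : Type*} {G : SimpleGraph V} {x y : V}
    (hxy : x ≠ y) (h : (G.induce {x, y}).Connected) : G.Adj x y := by
  obtain ⟨q⟩ := h.preconnected ⟨x, by simp⟩ ⟨y, by simp⟩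
  have hnil : ¬q.Nil := fun hq => hxy (congrArg Subtype.val hq.eq)
  have hadj : G.Adj x q.snd := q.adj_snd hnil
  rcases q.snd.2 with h | h
  · exact absurd h hadj.ne'
  · rwa [h] at hadj

section ParentGraph

variable {V : Type*}

def parentGraph (s : V) (p : V → V) : SimpleGraph V :=
  SimpleGraph.fromRel fun u v => v ≠ s ∧ u = p v

variable {s : V} {p : V → V} {d : V → ℕ}

lemma parentGraph_adj_parent (hd : ∀ v, v ≠ s → d (p v) < d v) {v : V} (hv : v ≠ s) :
    (parentGraph s p).Adj (p v) v :=
  (fromRel_adj ..).mpr ⟨fun h => (hd v hv).ne (congrArg d h), Or.inl ⟨hv, rfl⟩⟩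

lemma eq_parent_of_parentGraph_adj (hd : ∀ v, v ≠ s → d (p v) < d v) {x y : V}
    (hxy : (parentGraph s p).Adj x y) (hy : d y ≤ d x) : y = p x := by
  rcases ((fromRel_adj ..).mp hxy).2 with ⟨hys, rfl⟩ | ⟨-, rfl⟩
  · exact absurd (hd y hys) (not_lt.mpr hy)
  · rfl

lemma parentGraph_le_of_adj {G : SimpleGraph V} (h : ∀ v, v ≠ s → G.Adj (p v) v) :
    parentGraph s p ≤ G := by
  rintro u v ⟨-, ⟨hv, rfl⟩ | ⟨hu, rfl⟩⟩
  · exact h v hv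
  · exact (h u hu).symm

lemma parentGraph_induce_reachable (hd : ∀ v, v ≠ s → d (p v) < d v) {C : Set V} {r : V}
    (hr : r ∈ C) (hC : ∀ v ∈ C, v ≠ r → v ≠ s ∧ p v ∈ C) (v : V) (hv : v ∈ C) :
    ((parentGraph s p).induce C).Reachable ⟨r, hr⟩ ⟨v, hv⟩ := by
  induction hn : d v using Nat.strong_induction_on generalizing v with
  | _ n ih =>
    by_cases hvr : v = r
    · subst hvr; rfl
    obtain ⟨hvs, hpv⟩ := hC v hv hvr
    exact (ih _ (hn ▸ hd v hvs) (p v) hpv rfl).trans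
      (Adj.reachable (parentGraph_adj_parent hd hvs))

lemma parentGraph_induce_connected (hd : ∀ v, v ≠ s → d (p v) < d v) {C : Set V} {r : V}
    (hr : r ∈ C) (hC : ∀ v ∈ C, v ≠ r → v ≠ s ∧ p v ∈ C) :
    ((parentGraph s p).induce C).Connected :=
  have := Nonempty.intro (⟨r, hr⟩ : C)
  ⟨fun u v => (parentGraph_induce_reachable hd hr hC u u.2).symm.trans
    (parentGraph_induce_reachable hd hr hC v v.2)⟩

/-- On a cycle the vertex `x` of largest depth has two distinct neighbours of no larger depth,
but the only such neighbour of `x` is `p x`. -/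
lemma parentGraph_isAcyclic (hd : ∀ v, v ≠ s → d (p v) < d v) :
    (parentGraph s p).IsAcyclic := by
  classical
  intro u c hc
  obtain ⟨x, hx, hmax⟩ := c.support.toFinset.exists_max_image d ⟨u, by simp⟩
  rw [List.mem_toFinset] at hx
  set c' := c.rotate x hx
  have hc' : c'.IsCycle := hc.rotate hx
  have hle (i : ℕ) : d (c'.getVert i) ≤ d x :=
    hmax _ <| List.mem_toFinset.mpr <|
      (c.mem_support_rotate_iff x hx).mp (c'.getVert_mem_support i)
  exact hc'.snd_ne_penultimate <|
    (eq_parent_of_parentGraph_adj hd (c'.adj_snd hc'.not_nil) (hle _)).trans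
      (eq_parent_of_parentGraph_adj hd (c'.adj_penultimate hc'.not_nil).symm (hle _)).symm

lemma parentGraph_isTree (hd : ∀ v, v ≠ s → d (p v) < d v) : (parentGraph s p).IsTree := by
  have hreach := parentGraph_induce_reachable hd (Set.mem_univ s) (fun v _ hv => ⟨hv, trivial⟩)
  have : Nonempty V := ⟨s⟩
  refine ⟨⟨fun u v => ?_⟩, parentGraph_isAcyclic hd⟩
  exact ((hreach u trivial).map (Embedding.induce _).toHom).symm.trans
    ((hreach v trivial).map (Embedding.induce _).toHom)

lemma wdist_parentGraph_le {w : Sym2 V → ℝ} (hw : ∀ e, 0 ≤ w e)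
    (hd : ∀ v, v ≠ s → d (p v) < d v) {f : V → ℝ} (hfs : 0 ≤ f s)
    (hf : ∀ v, v ≠ s → f (p v) + w s(p v, v) ≤ f v) (v : V) :
    wdist (parentGraph s p) w s v ≤ f v := by
  suffices ∃ q : (parentGraph s p).Walk s v, (q.edges.map w).sum ≤ f v by
    obtain ⟨q, hq⟩ := this
    exact (wdist_le_walk_weight hw q).trans hq
  induction hn : d v using Nat.strong_induction_on generalizing v with
  | _ n ih =>
    by_cases hvs : v = s
    · subst hvs; exact ⟨.nil, by simpa using hfs⟩
    obtain ⟨q, hq⟩ := ih _ (hn ▸ hd v hvs) (p v) rfl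
    refine ⟨q.concat (parentGraph_adj_parent hd hvs), ?_⟩
    simp only [Walk.edges_concat, List.concat_eq_append, List.map_append, List.sum_append,
      List.map_cons, List.map_nil, List.sum_cons, List.sum_nil, add_zero]
    linarith [hf v hvs]

end ParentGraph

namespace WVtx

variable {η μ M : ℕ}

/-- The vertex of the literal `(i, b)`, encoded as in the clauses of `φ`: `v_i` if `b`,
else `v̄_i`. -/
def lit : Fin η × Bool → WVtx η μ M
  | (i, true) => pos i
  | (i, false) => neg i

lemma lit_injective : Function.Injective (lit : Fin η × Bool → WVtx η μ M) := by
  rintro ⟨i, _ | _⟩ ⟨j, _ | _⟩ h <;> simp_all [lit]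

def literals : Finset (WVtx η μ M) := Finset.univ.map ⟨lit, lit_injective⟩

lemma sum_literals (g : WVtx η μ M → ℝ) :
    ∑ v ∈ literals, g v = ∑ i, (g (pos i) + g (neg i)) := by
  simp [literals, Fintype.sum_prod_type, lit, add_comm]

end WVtx

open WVtx

section Weights

variable {η μ M : ℕ}

lemma wWt_nonneg (e : Sym2 (WVtx η μ M)) : 0 ≤ wWt η μ M e := by
  unfold wWt; split <;> norm_num

lemma wWt_pos_neg (i : Fin η) : wWt η μ M s(pos i, neg i) = 1 :=
  if_pos ⟨i, rfl⟩

lemma wWt_neg_pos (i : Fin η) : wWt η μ M s(neg i, pos i) = 1 :=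
  Sym2.eq_swap ▸ wWt_pos_neg i

lemma wWt_eq_zero {u v : WVtx η μ M} (h : ∀ i, s(u, v) ≠ s(pos i, neg i)) :
    wWt η μ M s(u, v) = 0 :=
  if_neg fun ⟨i, hi⟩ => h i hi

end Weights

theorem card_le_sum_wdist {η μ M : ℕ} {φ : Fin μ → Fin 3 → Fin η × Bool}
    {T : SimpleGraph (WVtx η μ M)} (hT : IsCST (wGraph φ) (wClusters η μ M) T) :
    (η : ℝ) ≤ ∑ v, wdist T (wWt η μ M) .s v := by
  obtain ⟨-, htree, hconn⟩ := hT
  have hpair (i : Fin η) : 1 ≤ wdist T (wWt η μ M) .s (pos i) +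
      wdist T (wWt η μ M) .s (neg i) := by
    have hadj : T.Adj (pos i) (neg i) :=
      adj_of_induce_pair_connected (by simp) (hconn _ (Or.inl (Or.inr ⟨i, rfl⟩)))
    simpa [wWt_pos_neg] using htree.weight_le_wdist_add_wdist wWt_nonneg hadj .s
  calc (η : ℝ) = ∑ _i : Fin η, (1 : ℝ) := by simp
    _ ≤ ∑ i, (wdist T (wWt η μ M) .s (pos i) + wdist T (wWt η μ M) .s (neg i)) :=
      Finset.sum_le_sum fun i _ => hpair i
    _ = ∑ v ∈ literals, wdist T (wWt η μ M) .s v := (sum_literals _).symm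
    _ ≤ ∑ v, wdist T (wWt η μ M) .s v :=
      Finset.sum_le_univ_sum_of_nonneg fun v => wdist_nonneg wWt_nonneg _ _

section Construction

variable {η μ M : ℕ} (φ : Fin μ → Fin 3 → Fin η × Bool) (a : Fin η → Bool)
  (k : Fin μ → Fin 3)

/-- Parent map of the optimal tree for an assignment `a` satisfying literal `k j` of each
clause `j`: the true literal of each variable hangs from `s`, the false one from the true one, and
the cluster of `c_j` hangs from its satisfied literal through `c_{j, k j}`. -/
def treeParent : WVtx η μ M → WVtx η μ M
  | .s => .s
  | pos i => if a i then .s else neg i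
  | neg i => if a i then pos i else .s
  | cl j k' => if k' = k j then lit (φ j k') else r j
  | r j => cl j (k j)
  | pth j t => if (t : ℕ) = 0 then r j else pth j ⟨t - 1, by omega⟩

abbrev treeGraph : SimpleGraph (WVtx η μ M) := parentGraph .s (treeParent φ a k)

def treeDepth : WVtx η μ M → ℕ
  | .s => 0
  | pos i => if a i then 1 else 2
  | neg i => if a i then 2 else 1
  | cl j k' => if k' = k j then 2 else 4
  | r _ => 3
  | pth _ t => 4 + t

def falseLitIndicator : WVtx η μ M → ℝ
  | pos i => if a i then 0 else 1
  | neg i => if a i then 1 else 0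
  | _ => 0

variable {φ a k}

lemma treeDepth_lit {l : Fin η × Bool} (hl : a l.1 = l.2) :
    treeDepth (M := M) a k (lit l) = 1 := by
  obtain ⟨i, _ | _⟩ := l <;> simp_all [lit, treeDepth]

lemma falseLitIndicator_lit {l : Fin η × Bool} (hl : a l.1 = l.2) :
    falseLitIndicator (μ := μ) (M := M) a (lit l) = 0 := by
  obtain ⟨i, _ | _⟩ := l <;> simp_all [lit, falseLitIndicator]

lemma wGraph_adj_lit_cl (j : Fin μ) (k' : Fin 3) :
    (wGraph (M := M) φ).Adj (lit (φ j k')) (cl j k') := by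
  rcases h : φ j k' with ⟨i, _ | _⟩ <;> simp [wGraph, wRel, lit, h]

lemma treeDepth_treeParent_lt (hk : ∀ j, a (φ j (k j)).1 = (φ j (k j)).2) (v : WVtx η μ M)
    (hv : v ≠ .s) : treeDepth a k (treeParent φ a k v) < treeDepth a k v := by
  cases v with
  | s => exact absurd rfl hv
  | pos i | neg i => cases h : a i <;> simp [treeParent, treeDepth, h]
  | cl j k' =>
    by_cases h : k' = k j
    · subst h; rw [treeParent, if_pos rfl, treeDepth_lit (hk j)]; simp [treeDepth]
    · simp [treeParent, treeDepth, h]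
  | r j => simp [treeParent, treeDepth]
  | pth j t => by_cases h : (t : ℕ) = 0 <;> simp [treeParent, treeDepth, h]; omega

lemma wGraph_adj_treeParent (v : WVtx η μ M) (hv : v ≠ .s) :
    (wGraph φ).Adj (treeParent φ a k v) v := by
  cases v with
  | s => exact absurd rfl hv
  | pos i | neg i => cases h : a i <;> simp [treeParent, wGraph, wRel, h]
  | cl j k' =>
    by_cases h : k' = k j
    · simpa [treeParent, h] using wGraph_adj_lit_cl j k'
    · simp [treeParent, wGraph, wRel, h]
  | r j => simp [treeParent, wGraph, wRel]
  | pth j t =>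
    by_cases h : (t : ℕ) = 0 <;> simp [treeParent, wGraph, wRel, h, Fin.ext_iff]
    omega

lemma falseLitIndicator_treeParent_add_le (hk : ∀ j, a (φ j (k j)).1 = (φ j (k j)).2)
    (v : WVtx η μ M) (hv : v ≠ .s) :
    falseLitIndicator a (treeParent φ a k v) + wWt η μ M s(treeParent φ a k v, v) ≤
      falseLitIndicator a v := by
  cases v with
  | s => exact absurd rfl hv
  | pos i | neg i =>
    cases h : a i <;>
      simp [treeParent, falseLitIndicator, wWt_pos_neg, wWt_neg_pos, wWt_eq_zero, h]
  | cl j k' =>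
    by_cases h : k' = k j
    · subst h
      rw [treeParent, if_pos rfl, falseLitIndicator_lit (hk j), wWt_eq_zero]
      · simp [falseLitIndicator]
      · rcases φ j (k j) with ⟨i, _ | _⟩ <;> simp [lit]
    · simp [treeParent, falseLitIndicator, wWt_eq_zero, h]
  | r j => simp [treeParent, falseLitIndicator, wWt_eq_zero]
  | pth j t => by_cases h : (t : ℕ) = 0 <;> simp [treeParent, falseLitIndicator, wWt_eq_zero, h]

lemma isCST_treeGraph (hk : ∀ j, a (φ j (k j)).1 = (φ j (k j)).2) :
    IsCST (wGraph φ) (wClusters η μ M) (treeGraph φ a k) := by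
  have hd := treeDepth_treeParent_lt (M := M) hk
  refine ⟨parentGraph_le_of_adj wGraph_adj_treeParent, parentGraph_isTree hd, ?_⟩
  rintro C ((rfl | ⟨i, rfl⟩) | ⟨j, rfl⟩)
  · exact parentGraph_induce_connected hd rfl fun v hv hvs => absurd hv hvs
  · cases h : a i
    · refine parentGraph_induce_connected hd (r := neg i) (by simp) ?_
      rintro v (rfl | rfl) hvr <;> simp_all [treeParent]
    · refine parentGraph_induce_connected hd (r := pos i) (by simp) ?_
      rintro v (rfl | rfl) hvr <;> simp_all [treeParent]
  · refine parentGraph_induce_connected hd (r := cl j (k j)) (by simp) ?_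
    rintro v (⟨k', rfl⟩ | rfl | ⟨t, rfl⟩) hvr
    · simp_all [treeParent]
    · simp [treeParent]
    · by_cases h : (t : ℕ) = 0 <;> simp [treeParent, h]

theorem sum_wdist_treeGraph_le (hk : ∀ j, a (φ j (k j)).1 = (φ j (k j)).2) :
    ∑ v, wdist (treeGraph φ a k) (wWt η μ M) .s v ≤ η :=
  calc ∑ v, wdist (treeGraph φ a k) (wWt η μ M) .s v
      ≤ ∑ v, falseLitIndicator a v :=
        Finset.sum_le_sum fun v _ => wdist_parentGraph_le wWt_nonneg
          (treeDepth_treeParent_lt hk) le_rfl (falseLitIndicator_treeParent_add_le hk) v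
    _ = ∑ v ∈ literals, falseLitIndicator a v := by
        refine (Finset.sum_subset (Finset.subset_univ _) fun v _ hv => ?_).symm
        cases v with
        | pos i => exact absurd (Finset.mem_map_of_mem _ (Finset.mem_univ (i, true))) hv
        | neg i => exact absurd (Finset.mem_map_of_mem _ (Finset.mem_univ (i, false))) hv
        | _ => rfl
    _ = η := by
        rw [sum_literals]
        simp [falseLitIndicator, ite_add_ite]

end Construction

theorem stmt12_general (η μ M : ℕ) (φ : Fin μ → Fin 3 → Fin η × Bool)
    (hsat : ∃ a : Fin η → Bool, ∀ j, ∃ k, a (φ j k).1 = (φ j k).2) :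
    IsLeast {c : ℝ | ∃ T : SimpleGraph (WVtx η μ M),
        IsCST (wGraph φ) (wClusters η μ M) T ∧
        c = ∑ v, wdist T (wWt η μ M) WVtx.s v}
      (η : ℝ) := by
  obtain ⟨a, ha⟩ := hsat
  choose k hk using ha
  refine ⟨⟨_, isCST_treeGraph hk, le_antisymm (card_le_sum_wdist (isCST_treeGraph hk))
    (sum_wdist_treeGraph_le hk)⟩, ?_⟩
  rintro c ⟨T, hT, rfl⟩
  exact card_le_sum_wdist hT

theorem stmt12 (η μ M : ℕ) (hM : 0 < M) (φ : Fin μ → Fin 3 → Fin η × Bool)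
    (hsat : ∃ a : Fin η → Bool, ∀ j, ∃ k, a (φ j k).1 = (φ j k).2) :
    IsLeast {c : ℝ | ∃ T : SimpleGraph (WVtx η μ M),
        IsCST (wGraph φ) (wClusters η μ M) T ∧
        c = ∑ v, wdist T (wWt η μ M) WVtx.s v}
      (η : ℝ) :=
  stmt12_general η μ M φ hsat
end

section
/- Let ⟨I, S⟩ be an X3C instance with |I| = 3η items, μ ≥ η sets, each item contained in at most 3 sets, let M be a positive integer, and let the unweighted graph G with its clustering and vertices s = u_1^0 and t = u_μ^3 be the associated CluSP instance. If ⟨I, S⟩ admits an exact cover, then there exists a clustered s–t path in G with at most 15μ edges. -/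
open SimpleGraph

/-- Vertices of the CluSP hardness graph associated with an X3C instance:
`u j t` (t = 0,1,2,3) for each set `S j`; `item i` is the vertex `v_i`;
`ipath i j t` are the vertices of the length-`M` path attached to `v_i`
corresponding to the set `S j` containing item `i` (its last vertex, with
`t = M - 1`, is the vertex `v_i^h`); `y z` and `ypath z j t` similarly form the
`y`-gadgets (the last path vertex is `y_z^j`). -/
inductive XVtx (η μ M : ℕ) where
  | u : Fin μ → Fin 4 → XVtx η μ M
  | item : Fin (3 * η) → XVtx η μ M
  | ipath : Fin (3 * η) → Fin μ → Fin M → XVtx η μ M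
  | y : Fin (μ - η) → XVtx η μ M
  | ypath : Fin (μ - η) → Fin μ → Fin M → XVtx η μ M
  deriving DecidableEq

/-- The rank (0, 1 or 2) of item `i` within the 3-element set `S j`. -/
def rankIn {η μ : ℕ} (S : Fin μ → Finset (Fin (3 * η))) (i : Fin (3 * η)) (j : Fin μ) : ℕ :=
  ((S j).filter (· < i)).card

/-- Base adjacency relation of the X3C reduction graph. -/
def xRel {η μ M : ℕ} (S : Fin μ → Finset (Fin (3 * η))) :
    XVtx η μ M → XVtx η μ M → Prop
  | .u j t, .u j' t' => (t : ℕ) = 3 ∧ (t' : ℕ) = 0 ∧ (j : ℕ) + 1 = (j' : ℕ)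
  | .u j t, .ipath i j' t' => j = j' ∧ i ∈ S j ∧ (t' : ℕ) = M - 1 ∧
      ((t : ℕ) = rankIn S i j ∨ (t : ℕ) = rankIn S i j + 1)
  | .item i, .ipath i' j t => i = i' ∧ i ∈ S j ∧ (t : ℕ) = 0
  | .ipath i j t, .ipath i' j' t' => i = i' ∧ j = j' ∧ i ∈ S j ∧ (t' : ℕ) = (t : ℕ) + 1
  | .y z, .ypath z' _ t => z = z' ∧ (t : ℕ) = 0
  | .ypath z j t, .ypath z' j' t' => z = z' ∧ j = j' ∧ (t' : ℕ) = (t : ℕ) + 1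
  | .u j t, .ypath _ j' t' => j = j' ∧ (t' : ℕ) = M - 1 ∧ ((t : ℕ) = 0 ∨ (t : ℕ) = 3)
  | _, _ => False

def xGraph {η μ M : ℕ} (S : Fin μ → Finset (Fin (3 * η))) : SimpleGraph (XVtx η μ M) :=
  SimpleGraph.fromRel (xRel S)

/-- The clusters: for each item `i`, the vertex `v_i` together with all vertices of
the attached paths; for each `z`, the vertex `y_z` together with all vertices of its
attached paths; all remaining vertices lie in singleton clusters. -/
def xClusters (η μ M : ℕ) (S : Fin μ → Finset (Fin (3 * η))) : Set (Set (XVtx η μ M)) :=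
  {Cl | (∃ i, Cl = {x | x = XVtx.item i ∨ ∃ j t, i ∈ S j ∧ x = XVtx.ipath i j t}) ∨
        (∃ z, Cl = {x | x = XVtx.y z ∨ ∃ j t, x = XVtx.ypath z j t}) ∨
        (∃ v, Cl = {v})}

/-- The elements of `Cl` occurring in the list `l` occur consecutively. -/
def ConsecutiveIn {α : Type*} (Cl : Set α) (l : List α) : Prop :=
  ∃ l₁ l₂ l₃ : List α, l = l₁ ++ l₂ ++ l₃ ∧ (∀ x ∈ l₂, x ∈ Cl) ∧
    (∀ x ∈ l₁, x ∉ Cl) ∧ (∀ x ∈ l₃, x ∉ Cl)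

/-- The X3C instance admits an exact cover: a subcollection of `η` of the sets
covering each item exactly once. -/
def HasExactCover {η μ : ℕ} (S : Fin μ → Finset (Fin (3 * η))) : Prop :=
  ∃ E : Finset (Fin μ), E.card = η ∧ ∀ i : Fin (3 * η), ∃! j, j ∈ E ∧ i ∈ S j

/-!
Given an exact cover `E`, walk through the set gadgets `S_1, …, S_μ` in order, taking the
top-path of `S_j` when `S_j ∈ E` and otherwise a bottom-path through a `y`-gadget of its own;
there are exactly `μ - η` sets outside the cover and `μ - η` gadgets. Every segment has at most
six edges, so the route has at most `7μ - 1`. Besides the `u`-vertices it only visits endpoints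
of attached paths, and meets each cluster at most once: the cluster of `x_i` because `x_i` lies in
exactly one set of the cover, a `y`-cluster because the gadgets are assigned injectively. A cluster
met at most once is met consecutively.
-/

theorem Finset.card_filter_lt_orderEmbOfFin {α : Type*} [LinearOrder α] (s : Finset α) {k : ℕ}
    (h : s.card = k) (i : Fin k) :
    (s.filter (· < s.orderEmbOfFin h i)).card = i := by
  have hfilter : s.filter (· < s.orderEmbOfFin h i) =
      (Finset.Iio i).map (s.orderEmbOfFin h).toEmbedding := by
    ext x
    simp only [Finset.mem_filter, Finset.mem_map, Finset.mem_Iio, RelEmbedding.coe_toEmbedding]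
    constructor
    · rintro ⟨hx, hlt⟩
      obtain ⟨m, rfl⟩ : x ∈ Set.range (s.orderEmbOfFin h) := by simpa using hx
      exact ⟨m, (s.orderEmbOfFin h).lt_iff_lt.mp hlt, rfl⟩
    · rintro ⟨m, hm, rfl⟩
      exact ⟨s.orderEmbOfFin_mem h m, (s.orderEmbOfFin h).lt_iff_lt.mpr hm⟩
  rw [hfilter, Finset.card_map, Fin.card_Iio]

theorem consecutiveIn_of_subsingleton {α : Type*} {Cl : Set α} {l : List α} (hl : l.Nodup)
    (h : ∀ x ∈ l, ∀ y ∈ l, x ∈ Cl → y ∈ Cl → x = y) : ConsecutiveIn Cl l := by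
  induction l with
  | nil => exact ⟨[], [], [], by simp, by simp, by simp, by simp⟩
  | cons a l ih =>
    obtain ⟨ha_notMem, hl⟩ := List.nodup_cons.mp hl
    by_cases ha : a ∈ Cl
    · refine ⟨[], [a], l, by simp, by simpa, by simp, fun x hx hxCl => ?_⟩
      obtain rfl := h x (List.mem_cons_of_mem a hx) a List.mem_cons_self hxCl ha
      exact ha_notMem hx
    · obtain ⟨l₁, l₂, l₃, rfl, h₂, h₁, h₃⟩ := ih hl fun x hx y hy =>
        h x (List.mem_cons_of_mem a hx) y (List.mem_cons_of_mem a hy)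
      refine ⟨a :: l₁, l₂, l₃, rfl, h₂, ?_, h₃⟩
      rintro x (_ | ⟨_, hx⟩)
      exacts [ha, h₁ x hx]

namespace SimpleGraph.Walk

variable {V : Type*} {G : SimpleGraph V} {n : ℕ} {a b : Fin n → V}
  (w : ∀ k, G.Walk (a k) (b k))
  (h : ∀ (k : ℕ) (hk : k + 1 < n), G.Adj (b ⟨k, by omega⟩) (a ⟨k + 1, hk⟩))

def chain : (k : ℕ) → (hk : k < n) → G.Walk (a ⟨0, by omega⟩) (b ⟨k, hk⟩)
  | 0, hk => w ⟨0, hk⟩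
  | k + 1, hk => (chain k (by omega)).append (.cons (h k hk) (w ⟨k + 1, hk⟩))

theorem mem_support_chain {k : ℕ} {hk : k < n} {v : V} (hv : v ∈ (chain w h k hk).support) :
    ∃ j : Fin n, (j : ℕ) ≤ k ∧ v ∈ (w j).support := by
  induction k with
  | zero => exact ⟨_, le_rfl, hv⟩
  | succ k ih =>
    rw [chain, support_append, support_cons, List.tail_cons, List.mem_append] at hv
    rcases hv with hv | hv
    · obtain ⟨j, hj, hv⟩ := ih hv
      exact ⟨j, by omega, hv⟩
    · exact ⟨_, le_rfl, hv⟩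

theorem length_chain_le {L : ℕ} (hL : ∀ j, (w j).length ≤ L) (k : ℕ) (hk : k < n) :
    (chain w h k hk).length ≤ (k + 1) * L + k := by
  induction k with
  | zero => simpa [chain] using hL _
  | succ k ih =>
    have := ih (by omega)
    have := hL ⟨k + 1, hk⟩
    rw [chain, length_append, length_cons]
    nlinarith

theorem isPath_chain (hw : ∀ j, (w j).IsPath)
    (hdisj : ∀ i j v, v ∈ (w i).support → v ∈ (w j).support → i = j) (k : ℕ) (hk : k < n) :
    (chain w h k hk).IsPath := by
  induction k with
  | zero => exact hw _
  | succ k ih =>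
    rw [isPath_def, chain, support_append, support_cons, List.tail_cons, List.nodup_append]
    refine ⟨(ih (by omega)).support_nodup, (hw _).support_nodup, ?_⟩
    rintro v hv _ hv' rfl
    obtain ⟨j, hj, hvj⟩ := mem_support_chain w h hv
    have := congrArg Fin.val (hdisj _ _ v hvj hv')
    simp only at this
    omega

end SimpleGraph.Walk

namespace XVtx

open SimpleGraph

variable {η μ M : ℕ} (S : Fin μ → Finset (Fin (3 * η)))

/-- The index of the endpoint `v_i^h` (resp. `y_z^j`) on an attached path. -/
def pathEnd (hM : 0 < M) : Fin M := ⟨M - 1, by omega⟩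

theorem xGraph_adj_of_xRel {v w : XVtx η μ M} (hne : v ≠ w) (h : xRel S v w) :
    (xGraph S).Adj v w :=
  (fromRel_adj _ _ _).mpr ⟨hne, Or.inl h⟩

theorem adj_u_ipath (hM : 0 < M) {j : Fin μ} {t : Fin 4} {i : Fin (3 * η)} (hi : i ∈ S j)
    (ht : (t : ℕ) = rankIn S i j ∨ (t : ℕ) = rankIn S i j + 1) :
    (xGraph S).Adj (u j t) (ipath i j (pathEnd hM)) :=
  xGraph_adj_of_xRel S (by simp) ⟨rfl, hi, rfl, ht⟩

theorem adj_u_ypath (hM : 0 < M) {j : Fin μ} {t : Fin 4} (z : Fin (μ - η))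
    (ht : (t : ℕ) = 0 ∨ (t : ℕ) = 3) :
    (xGraph S).Adj (u j t) (ypath z j (pathEnd hM)) :=
  xGraph_adj_of_xRel S (by simp) ⟨rfl, rfl, ht⟩

theorem adj_u_u {j j' : Fin μ} (h : (j : ℕ) + 1 = j') :
    (xGraph S).Adj (u j 3 : XVtx η μ M) (u j' 0) :=
  xGraph_adj_of_xRel S (by simp) ⟨rfl, rfl, h⟩

variable (hcard : ∀ j, (S j).card = 3) (hM : 0 < M)

def itemOf (j : Fin μ) (k : Fin 3) : Fin (3 * η) :=
  (S j).orderEmbOfFin (hcard j) k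

theorem itemOf_mem (j : Fin μ) (k : Fin 3) : itemOf S hcard j k ∈ S j :=
  (S j).orderEmbOfFin_mem (hcard j) k

theorem rankIn_itemOf (j : Fin μ) (k : Fin 3) : rankIn S (itemOf S hcard j k) j = k :=
  (S j).card_filter_lt_orderEmbOfFin (hcard j) k

/-- The part `u_j^k, v_i^h, u_j^{k+1}` of the top-path of `S j`, where `x_i` is the
`(k+1)`-st item of `S j`. -/
def topStep (j : Fin μ) (k : Fin 3) :
    (xGraph S).Walk (u j k.castSucc : XVtx η μ M) (u j k.succ) :=
  have hi := itemOf_mem S hcard j k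
  have hrank := rankIn_itemOf S hcard j k
  .cons (adj_u_ipath S hM hi (Or.inl (by rw [hrank]; rfl)))
    (.cons (adj_u_ipath S hM hi (Or.inr (by rw [hrank]; rfl))).symm .nil)

def topPath (j : Fin μ) : (xGraph S).Walk (u j 0 : XVtx η μ M) (u j 3) :=
  (topStep S hcard hM j 0).append ((topStep S hcard hM j 1).append (topStep S hcard hM j 2))

def bottomPath (j : Fin μ) (z : Fin (μ - η)) : (xGraph S).Walk (u j 0 : XVtx η μ M) (u j 3) :=
  .cons (adj_u_ypath S hM z (Or.inl rfl)) (.cons (adj_u_ypath S hM z (Or.inr rfl)).symm .nil)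

theorem mem_support_topPath {j : Fin μ} {v : XVtx η μ M}
    (hv : v ∈ (topPath S hcard hM j).support) :
    (∃ t, v = u j t) ∨ ∃ i ∈ S j, v = ipath i j (pathEnd hM) := by
  simp only [topPath, topStep, Walk.support_append, Walk.support_cons, Walk.support_nil,
    List.tail_cons, List.cons_append, List.nil_append, List.mem_cons, List.not_mem_nil,
    or_false] at hv
  rcases hv with rfl | rfl | rfl | rfl | rfl | rfl | rfl
  all_goals first | exact Or.inl ⟨_, rfl⟩ | exact Or.inr ⟨_, itemOf_mem S hcard j _, rfl⟩

theorem topPath_isPath (j : Fin μ) : (topPath S hcard hM j).IsPath := by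
  have hinj := ((S j).orderEmbOfFin (hcard j)).injective
  rw [Walk.isPath_def]
  simp only [topPath, topStep, Walk.support_append, Walk.support_cons, Walk.support_nil,
    List.tail_cons]
  simp [itemOf, hinj.eq_iff]

theorem bottomPath_isPath (j : Fin μ) (z : Fin (μ - η)) : (bottomPath S hM j z).IsPath := by
  simp [Walk.isPath_def, bottomPath]

variable {E : Finset (Fin μ)} (e : {j // j ∈ Eᶜ} ↪ Fin (μ - η))

def segment (j : Fin μ) : (xGraph S).Walk (u j 0 : XVtx η μ M) (u j 3) :=
  if h : j ∈ E then topPath S hcard hM j else bottomPath S hM j (e ⟨j, Finset.mem_compl.mpr h⟩)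

def OnSegment (j : Fin μ) (v : XVtx η μ M) : Prop :=
  (∃ t, v = u j t) ∨ (j ∈ E ∧ ∃ i ∈ S j, v = ipath i j (pathEnd hM)) ∨
    ∃ h : j ∈ Eᶜ, v = ypath (e ⟨j, h⟩) j (pathEnd hM)

theorem segment_isPath (j : Fin μ) : (segment S hcard hM e j).IsPath := by
  unfold segment
  split
  · exact topPath_isPath S hcard hM j
  · exact bottomPath_isPath S hM j _

theorem length_segment_le (j : Fin μ) : (segment S hcard hM e j).length ≤ 6 := by
  unfold segment
  split <;> simp [topPath, topStep, bottomPath]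

theorem onSegment_of_mem_support {j : Fin μ} {v : XVtx η μ M}
    (hv : v ∈ (segment S hcard hM e j).support) : OnSegment S hM e j v := by
  unfold segment at hv
  split at hv
  case isTrue hj =>
    rcases mem_support_topPath S hcard hM hv with hu | ⟨i, hi, rfl⟩
    exacts [Or.inl hu, Or.inr (Or.inl ⟨hj, i, hi, rfl⟩)]
  case isFalse hj =>
    simp only [bottomPath, Walk.support_cons, Walk.support_nil, List.mem_cons,
      List.not_mem_nil, or_false] at hv
    rcases hv with rfl | rfl | rfl
    exacts [Or.inl ⟨_, rfl⟩, Or.inr (Or.inr ⟨_, rfl⟩), Or.inl ⟨_, rfl⟩]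

variable {S hcard hM e}

theorem OnSegment.index_eq {j j' : Fin μ} {v : XVtx η μ M}
    (h : OnSegment S hM e j v) (h' : OnSegment S hM e j' v) : j = j' := by
  rcases h with ⟨_, rfl⟩ | ⟨-, _, -, rfl⟩ | ⟨_, rfl⟩ <;>
    rcases h' with ⟨_, hv⟩ | ⟨-, _, -, hv⟩ | ⟨_, hv⟩ <;> simp_all

theorem index_eq_of_mem_support_segment {j j' : Fin μ} {v : XVtx η μ M}
    (h : v ∈ (segment S hcard hM e j).support) (h' : v ∈ (segment S hcard hM e j').support) :
    j = j' :=
  (onSegment_of_mem_support S hcard hM e h).index_eq (onSegment_of_mem_support S hcard hM e h')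

theorem OnSegment.of_mem_itemCluster {j : Fin μ} {i : Fin (3 * η)} {v : XVtx η μ M}
    (h : OnSegment S hM e j v) (hv : v = item i ∨ ∃ j' t, i ∈ S j' ∧ v = ipath i j' t) :
    j ∈ E ∧ i ∈ S j ∧ v = ipath i j (pathEnd hM) := by
  rcases h with ⟨_, rfl⟩ | ⟨hj, i', hi', rfl⟩ | ⟨_, rfl⟩ <;> simp at hv
  obtain ⟨hi, rfl⟩ := hv
  exact ⟨hj, hi, rfl⟩

theorem OnSegment.of_mem_yCluster {j : Fin μ} {z : Fin (μ - η)} {v : XVtx η μ M}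
    (h : OnSegment S hM e j v) (hv : v = y z ∨ ∃ j' t, v = ypath z j' t) :
    ∃ hj : j ∈ Eᶜ, e ⟨j, hj⟩ = z ∧ v = ypath z j (pathEnd hM) := by
  rcases h with ⟨_, rfl⟩ | ⟨-, _, -, rfl⟩ | ⟨hj, rfl⟩ <;> simp at hv
  exact ⟨hj, hv, by rw [hv]⟩

theorem OnSegment.eq_of_mem_cluster (hcover : ∀ i, ∃! j, j ∈ E ∧ i ∈ S j)
    {Cl : Set (XVtx η μ M)} (hCl : Cl ∈ xClusters η μ M S) {j j' : Fin μ} {v v' : XVtx η μ M}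
    (h : OnSegment S hM e j v) (h' : OnSegment S hM e j' v') (hv : v ∈ Cl) (hv' : v' ∈ Cl) :
    v = v' := by
  rcases hCl with ⟨i, rfl⟩ | ⟨z, rfl⟩ | ⟨w, rfl⟩
  · obtain ⟨hj, hi, rfl⟩ := h.of_mem_itemCluster hv
    obtain ⟨hj', hi', rfl⟩ := h'.of_mem_itemCluster hv'
    rw [(hcover i).unique ⟨hj, hi⟩ ⟨hj', hi'⟩]
  · obtain ⟨hj, hz, rfl⟩ := h.of_mem_yCluster hv
    obtain ⟨hj', hz', rfl⟩ := h'.of_mem_yCluster hv'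
    obtain rfl : j = j' := congrArg Subtype.val (e.injective (hz.trans hz'.symm))
    rfl
  · exact hv.trans hv'.symm

end XVtx

theorem stmt14 (η μ M : ℕ) (hμpos : 0 < μ) (hM : 0 < M)
    (S : Fin μ → Finset (Fin (3 * η)))
    (hcard : ∀ j, (S j).card = 3)
    (hcover : HasExactCover S) :
    ∃ p : (xGraph S : SimpleGraph (XVtx η μ M)).Walk
        (XVtx.u ⟨0, hμpos⟩ ⟨0, by omega⟩) (XVtx.u ⟨μ - 1, by omega⟩ ⟨3, by omega⟩),
      p.IsPath ∧ (∀ Cl ∈ xClusters η μ M S, ConsecutiveIn Cl p.support) ∧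
      p.length ≤ 15 * μ := by
  classical
  obtain ⟨E, hEcard, hEcover⟩ := hcover
  let e : {j // j ∈ Eᶜ} ↪ Fin (μ - η) :=
    (Eᶜ.equivFinOfCardEq (by rw [Finset.card_compl, hEcard, Fintype.card_fin])).toEmbedding
  let p := Walk.chain (XVtx.segment S hcard hM e) (fun _ _ => XVtx.adj_u_u S rfl) (μ - 1)
    (by omega)
  have hp : p.IsPath := Walk.isPath_chain _ _ (XVtx.segment_isPath S hcard hM e)
    (fun _ _ _ => XVtx.index_eq_of_mem_support_segment) _ _
  refine ⟨p, hp, fun Cl hCl => consecutiveIn_of_subsingleton hp.support_nodup ?_, ?_⟩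
  · intro x hx y hy hxCl hyCl
    obtain ⟨jx, -, hx⟩ := Walk.mem_support_chain _ _ hx
    obtain ⟨jy, -, hy⟩ := Walk.mem_support_chain _ _ hy
    exact (XVtx.onSegment_of_mem_support S hcard hM e hx).eq_of_mem_cluster hEcover hCl
      (XVtx.onSegment_of_mem_support S hcard hM e hy) hxCl hyCl
  · calc p.length ≤ (μ - 1 + 1) * 6 + (μ - 1) :=
          Walk.length_chain_le _ _ (XVtx.length_segment_le S hcard hM e) _ _
      _ ≤ 15 * μ := by omega
end
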